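/- arXiv:2410.01489 — 6 statements merged into one kernel-verified Lean document; each statement's English description precedes it below -/
import Mathlib

section
/- Let (Ω,ρ) be a compact connected metric space, σ a Borel probability measure on Ω with full support, and U ⊆ Ω open and connected. Suppose u : U → [-∞,∞) is upper semi-continuous and there exists R > 0 such that for every closed ball B(x,r) ⊆ U with 0 < r < R we have u(x) ≤ (1/σ(B(x,r))) ∫_{B(x,r)} u dσ. If u attains its supremum over U at some point of U, then u is constant on U. -/
/-! At a point `x` where `u` attains its maximum `m`, the sub-mean inequality on a small ball `B`
around `x` gives `∫_B (m - u) dσ ≤ 0` while `u ≤ m`, so `u = m` σ-a.e. on `B`. The set `{u < m}`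
is open by upper semicontinuity, so full support of `σ` upgrades this to `u = m` on the open ball.
Hence `U ∩ {u = m}` and `U ∩ {u < m}` are disjoint open sets covering the connected set `U`. -/

open MeasureTheory Metric Set ENNReal

/-- Map an extended real to an extended nonnegative real (negative values go to 0). -/
noncomputable def toe (x : EReal) : ℝ≥0∞ := if x = ⊤ then ⊤ else ENNReal.ofReal x.toReal

/-- Integral of an `EReal`-valued function over a set, as difference of the
lower integrals of the positive and negative parts. -/
noncomputable def eInt {Ω : Type*} [MeasurableSpace Ω] (σ : Measure Ω) (s : Set Ω)
    (u : Ω → EReal) : EReal :=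
  ((∫⁻ y in s, toe (u y) ∂σ : ℝ≥0∞) : EReal) - ((∫⁻ y in s, toe (-(u y)) ∂σ : ℝ≥0∞) : EReal)

lemma UpperSemicontinuousOn.isOpen_inter_preimage_Iio {α β : Type*} [TopologicalSpace α]
    [Preorder β] {f : α → β} {s : Set α} (hf : UpperSemicontinuousOn f s) (hs : IsOpen s)
    (b : β) : IsOpen (s ∩ f ⁻¹' Iio b) := by
  obtain ⟨v, hv, hsv⟩ := upperSemicontinuousOn_iff_preimage_Iio.1 hf b
  rw [hsv]
  exact hs.inter hv

lemma UpperSemicontinuousOn.aemeasurable_restrict {α β : Type*} [TopologicalSpace α]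
    [MeasurableSpace α] [OpensMeasurableSpace α] [LinearOrder β] [OrderTop β]
    [TopologicalSpace β] [OrderTopology β] [SecondCountableTopology β] [MeasurableSpace β]
    [BorelSpace β] {f : α → β} {s : Set α} (hf : UpperSemicontinuousOn f s) (hs : IsOpen s)
    (μ : Measure α) : AEMeasurable f (μ.restrict s) := by
  classical
  -- extending by `⊤` keeps every sublevel set `Iio b` inside `s`
  refine ⟨s.piecewise f fun _ => ⊤, measurable_of_Iio fun b => ?_, ?_⟩
  · have hpre : s.piecewise f (fun _ => ⊤) ⁻¹' Iio b = s ∩ f ⁻¹' Iio b := by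
      ext x
      by_cases hx : x ∈ s <;> simp [hx]
    rw [hpre]
    exact (hf.isOpen_inter_preimage_Iio hs b).measurableSet
  · filter_upwards [ae_restrict_mem hs.measurableSet] with x hx
    exact (piecewise_eq_of_mem _ _ _ hx).symm

lemma eq_of_upperSemicontinuousOn_of_ae_eq {α β : Type*} [TopologicalSpace α]
    [MeasurableSpace α] {μ : Measure α} [μ.IsOpenPosMeasure] [LinearOrder β] {f : α → β}
    {s : Set α} (hs : IsOpen s) (hf : UpperSemicontinuousOn f s) {b : β}
    (hle : ∀ x ∈ s, f x ≤ b) (hae : ∀ᵐ x ∂μ.restrict s, f x = b) : ∀ x ∈ s, f x = b := by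
  have hnull : μ (s ∩ f ⁻¹' Iio b) = 0 := by
    rw [← Measure.restrict_eq_self μ inter_subset_left]
    exact measure_mono_null (fun x hx => hx.2.ne) (ae_iff.1 hae)
  have hempty := ((hf.isOpen_inter_preimage_Iio hs b).measure_eq_zero_iff μ).1 hnull
  intro x hx
  exact (hle x hx).eq_of_not_lt fun hlt => hempty.subset ⟨hx, hlt⟩

lemma MeasureTheory.Measure.isOpenPosMeasure_of_measure_closedBall_pos {α : Type*}
    [PseudoMetricSpace α] [MeasurableSpace α] (μ : Measure α)
    (h : ∀ x r, 0 < r → 0 < μ (closedBall x r)) :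
    μ.IsOpenPosMeasure := by
  refine ⟨fun U hU ⟨x, hx⟩ => ?_⟩
  obtain ⟨ε, hε, hball⟩ := Metric.isOpen_iff.1 hU x hx
  exact ((h x (ε / 2) (half_pos hε)).trans_le
    (measure_mono ((closedBall_subset_ball (half_lt_self hε)).trans hball))).ne'

lemma measurable_toe : Measurable toe :=
  Measurable.ite measurableSet_eq measurable_const
    (ENNReal.measurable_ofReal.comp measurable_ereal_toReal)

lemma toe_coe (a : ℝ) : toe a = ENNReal.ofReal a := by
  simp [toe]

lemma toe_bot : toe ⊥ = 0 := by simp [toe]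

lemma toe_top : toe ⊤ = ⊤ := by simp [toe]

lemma monotone_toe : Monotone toe := by
  intro a b hab
  induction b using EReal.rec with
  | bot => rw [le_bot_iff.1 hab]
  | top => rw [toe_top]; exact le_top
  | coe c =>
    induction a using EReal.rec with
    | bot => rw [toe_bot]; exact zero_le
    | top => exact absurd hab (by simp)
    | coe a => rw [toe_coe, toe_coe]; exact ENNReal.ofReal_le_ofReal (EReal.coe_le_coe_iff.1 hab)

lemma ofReal_neg_add_ofReal_add_ofReal_sub {m c : ℝ} (h : c ≤ m) :
    ENNReal.ofReal (-m) + ENNReal.ofReal c + ENNReal.ofReal (m - c) =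
      ENNReal.ofReal m + ENNReal.ofReal (-c) := by
  rw [← toReal_eq_toReal_iff' (by finiteness) (by finiteness),
    toReal_add (add_ne_top.2 ⟨ofReal_ne_top, ofReal_ne_top⟩) ofReal_ne_top,
    toReal_add ofReal_ne_top ofReal_ne_top, toReal_add ofReal_ne_top ofReal_ne_top]
  simp only [toReal_ofReal', max_eq_left (sub_nonneg.2 h)]
  grind

-- `m - z ≥ 0` rearranged in `ℝ≥0∞` (the sides differ by `(m - z)⁺`), so it can be integrated.
lemma ofReal_neg_add_toe_le {m : ℝ} {z : EReal} (hz : z ≤ m) :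
    ENNReal.ofReal (-m) + toe z ≤ ENNReal.ofReal m + toe (-z) := by
  induction z using EReal.rec with
  | bot => rw [EReal.neg_bot, toe_top, add_top]; exact le_top
  | top => exact absurd hz (by simp)
  | coe c =>
    rw [← EReal.coe_neg, toe_coe, toe_coe,
      ← ofReal_neg_add_ofReal_add_ofReal_sub (EReal.coe_le_coe_iff.1 hz)]
    exact le_self_add

lemma eq_of_ofReal_neg_add_toe_eq {m : ℝ} {z : EReal} (hz : z ≤ m)
    (h : ENNReal.ofReal (-m) + toe z = ENNReal.ofReal m + toe (-z)) : z = m := by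
  induction z using EReal.rec with
  | bot => simp [toe_bot, toe_top] at h
  | top => exact absurd hz (by simp)
  | coe c =>
    have hcm := EReal.coe_le_coe_iff.1 hz
    rw [← EReal.coe_neg, toe_coe, toe_coe, ← ofReal_neg_add_ofReal_add_ofReal_sub hcm] at h
    have hsub : ENNReal.ofReal (m - c) = 0 :=
      (ENNReal.add_right_inj (by finiteness)).1 (h.symm.trans (add_zero _).symm)
    rw [ENNReal.ofReal_eq_zero] at hsub
    exact congrArg _ (by linarith)

lemma ofReal_mul_add_le_of_coe_mul_le_sub {x : ℝ} {b a n : ℝ≥0∞} (hb : b ≠ ∞)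
    (h : (x : EReal) * b ≤ (a : EReal) - n) :
    ENNReal.ofReal x * b + n ≤ a + ENNReal.ofReal (-x) * b := by
  rcases eq_or_ne a ∞ with rfl | ha
  · simp
  have hn : n ≠ ∞ := by
    rintro rfl
    rw [EReal.coe_ennreal_top, EReal.sub_top, ← EReal.coe_ennreal_toReal hb, ← EReal.coe_mul] at h
    exact EReal.coe_ne_bot _ (le_bot_iff.1 h)
  rw [← EReal.coe_ennreal_toReal hb, ← EReal.coe_ennreal_toReal ha, ← EReal.coe_ennreal_toReal hn,
    ← EReal.coe_mul, ← EReal.coe_sub, EReal.coe_le_coe_iff] at h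
  rw [← ENNReal.toReal_le_toReal (by finiteness) (by finiteness), toReal_add (by finiteness) hn,
    toReal_add ha (by finiteness), toReal_mul, toReal_mul, toReal_ofReal', toReal_ofReal']
  have hs := b.toReal_nonneg
  rcases le_total 0 x with hx | hx
  · rw [max_eq_left hx, max_eq_right (neg_nonpos.2 hx)]
    linarith
  · rw [max_eq_right hx, max_eq_left (neg_nonneg.2 hx)]
    nlinarith

lemma ae_eq_of_le_of_coe_mul_le_eInt {Ω : Type*} [MeasurableSpace Ω] {σ : Measure Ω}
    [IsFiniteMeasure σ] {B : Set Ω} (hB : MeasurableSet B) {u : Ω → EReal}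
    (hu : AEMeasurable u (σ.restrict B)) {m : ℝ} (hle : ∀ y ∈ B, u y ≤ m)
    (hsub : (m : EReal) * σ B ≤ eInt σ B u) : ∀ᵐ y ∂σ.restrict B, u y = m := by
  have hle_ae : (fun y => ENNReal.ofReal (-m) + toe (u y))
      ≤ᵐ[σ.restrict B] fun y => ENNReal.ofReal m + toe (-u y) := by
    filter_upwards [ae_restrict_mem hB] with y hy
    exact ofReal_neg_add_toe_le (hle y hy)
  have hpos : ∫⁻ y in B, toe (u y) ∂σ ≤ ENNReal.ofReal m * σ B := by
    calc ∫⁻ y in B, toe (u y) ∂σ ≤ ∫⁻ _ in B, toe m ∂σ :=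
          setLIntegral_mono' hB fun y hy => monotone_toe (hle y hy)
      _ = ENNReal.ofReal m * σ B := by rw [setLIntegral_const, toe_coe]
  have hint_pos : ∫⁻ y in B, ENNReal.ofReal (-m) + toe (u y) ∂σ
      = ENNReal.ofReal (-m) * σ B + ∫⁻ y in B, toe (u y) ∂σ := by
    rw [lintegral_add_left measurable_const, setLIntegral_const]
  have hint_neg : ∫⁻ y in B, ENNReal.ofReal m + toe (-u y) ∂σ
      = ENNReal.ofReal m * σ B + ∫⁻ y in B, toe (-u y) ∂σ := by
    rw [lintegral_add_left measurable_const, setLIntegral_const]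
  have hae := ae_eq_of_ae_le_of_lintegral_le hle_ae
    (by rw [hint_pos]; exact add_ne_top.2 ⟨by finiteness, ne_top_of_le_ne_top (by finiteness) hpos⟩)
    (aemeasurable_const.add (measurable_toe.comp_aemeasurable hu.neg))
    (by
      rw [hint_pos, hint_neg, add_comm (ENNReal.ofReal (-m) * σ B)]
      exact ofReal_mul_add_le_of_coe_mul_le_sub (measure_ne_top σ B) hsub)
  filter_upwards [hae, ae_restrict_mem hB] with y hy hyB
  exact eq_of_ofReal_neg_add_toe_eq (hle y hyB) hy

def IsSubharmonicOn {Ω : Type*} [PseudoMetricSpace Ω] [MeasurableSpace Ω] (σ : Measure Ω)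
    (R : ℝ) (U : Set Ω) (u : Ω → EReal) : Prop :=
  ∀ (x : Ω) (r : ℝ), 0 < r → r < R → closedBall x r ⊆ U →
    u x * ((σ (closedBall x r) : ℝ≥0∞) : EReal) ≤ eInt σ (closedBall x r) u

lemma IsSubharmonicOn.isOpen_inter_preimage_singleton {Ω : Type*} [PseudoMetricSpace Ω]
    [MeasurableSpace Ω] [OpensMeasurableSpace Ω] {σ : Measure Ω} [IsFiniteMeasure σ]
    [σ.IsOpenPosMeasure] {R : ℝ} {U : Set Ω} {u : Ω → EReal} (hsub : IsSubharmonicOn σ R U u)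
    (hR : 0 < R) (hU : IsOpen U) (husc : UpperSemicontinuousOn u U) {m : ℝ}
    (hmax : ∀ x ∈ U, u x ≤ m) : IsOpen (U ∩ u ⁻¹' {(m : EReal)}) := by
  rw [Metric.isOpen_iff]
  rintro x ⟨hxU, hx : u x = m⟩
  obtain ⟨ε, hε, hεU⟩ := Metric.isOpen_iff.1 hU x hxU
  set r := min (ε / 2) (R / 2)
  have hr : 0 < r := lt_min (half_pos hε) (half_pos hR)
  have hBU : closedBall x r ⊆ U :=
    (closedBall_subset_ball ((min_le_left _ _).trans_lt (half_lt_self hε))).trans hεU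
  have hmean := hsub x r hr ((min_le_right _ _).trans_lt (half_lt_self hR)) hBU
  rw [hx] at hmean
  have hae := ae_eq_of_le_of_coe_mul_le_eInt measurableSet_closedBall
    ((husc.aemeasurable_restrict hU σ).mono_set hBU) (fun y hy => hmax y (hBU hy)) hmean
  refine ⟨r, hr, fun y hy => ⟨hBU (ball_subset_closedBall hy), ?_⟩⟩
  exact eq_of_upperSemicontinuousOn_of_ae_eq isOpen_ball
    (husc.mono (ball_subset_closedBall.trans hBU))
    (fun y hy => hmax y (hBU (ball_subset_closedBall hy)))
    (ae_restrict_of_ae_restrict_of_subset ball_subset_closedBall hae) y hy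

theorem maximum_principle_general
    {Ω : Type*} [MetricSpace Ω]
    [MeasurableSpace Ω] [BorelSpace Ω]
    (σ : Measure Ω) [IsProbabilityMeasure σ]
    (hσfull : ∀ (x : Ω) (r : ℝ), 0 < r → 0 < σ (closedBall x r))
    (U : Set Ω) (hUopen : IsOpen U) (hUconn : IsConnected U)
    (u : Ω → EReal) (hfin : ∀ x ∈ U, u x ≠ ⊤)
    (husc : UpperSemicontinuousOn u U)
    (R : ℝ) (hR : 0 < R)
    (hsub : ∀ (x : Ω) (r : ℝ), 0 < r → r < R → closedBall x r ⊆ U →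
      u x * ((σ (closedBall x r) : ℝ≥0∞) : EReal) ≤ eInt σ (closedBall x r) u)
    (x₀ : Ω) (hx₀ : x₀ ∈ U) (hmax : ∀ x ∈ U, u x ≤ u x₀) :
    ∀ x ∈ U, u x = u x₀ := by
  have := Measure.isOpenPosMeasure_of_measure_closedBall_pos σ hσfull
  induction hM : u x₀ using EReal.rec with
  | bot => exact fun x hx => le_bot_iff.1 (hM ▸ hmax x hx)
  | top => exact absurd hM (hfin x₀ hx₀)
  | coe m =>
    rw [hM] at hmax
    have hcover : U ⊆ (U ∩ u ⁻¹' {(m : EReal)}) ∪ (U ∩ u ⁻¹' Iio m) := fun x hx =>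
      (hmax x hx).eq_or_lt.imp (⟨hx, ·⟩) (⟨hx, ·⟩)
    have hdisj : Disjoint (U ∩ u ⁻¹' {(m : EReal)}) (U ∩ u ⁻¹' Iio m) :=
      disjoint_left.2 fun y hy hy' => (hy'.2 : u y < m).ne hy.2
    have hsubh : IsSubharmonicOn σ R U u := hsub
    have hlevel := hUconn.isPreconnected.subset_left_of_subset_union
      (hsubh.isOpen_inter_preimage_singleton hR hUopen husc hmax)
      (husc.isOpen_inter_preimage_Iio hUopen _) hdisj hcover ⟨x₀, hx₀, hx₀, hM⟩
    exact fun x hx => (hlevel hx).2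

/-- Maximum principle for subharmonic functions on a compact connected metric space:
if `u` is upper semicontinuous, finite, and satisfies the submean value inequality with
radius `R` on an open connected `U`, and attains its supremum over `U` at a point of `U`,
then `u` is constant on `U`. -/
theorem maximum_principle
    {Ω : Type*} [MetricSpace Ω] [CompactSpace Ω] [ConnectedSpace Ω]
    [MeasurableSpace Ω] [BorelSpace Ω]
    (σ : Measure Ω) [IsProbabilityMeasure σ]
    (hσfull : ∀ (x : Ω) (r : ℝ), 0 < r → 0 < σ (closedBall x r))
    (U : Set Ω) (hUopen : IsOpen U) (hUconn : IsConnected U)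
    (u : Ω → EReal) (hfin : ∀ x ∈ U, u x ≠ ⊤)
    (husc : UpperSemicontinuousOn u U)
    (R : ℝ) (hR : 0 < R)
    (hsub : ∀ (x : Ω) (r : ℝ), 0 < r → r < R → closedBall x r ⊆ U →
      u x * ((σ (closedBall x r) : ℝ≥0∞) : EReal) ≤ eInt σ (closedBall x r) u)
    (x₀ : Ω) (hx₀ : x₀ ∈ U) (hmax : ∀ x ∈ U, u x ≤ u x₀) :
    ∀ x ∈ U, u x = u x₀ :=
  maximum_principle_general σ hσfull U hUopen hUconn u hfin husc R hR hsub x₀ hx₀ hmax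
end

section
/- Let (Ω,ρ) be a compact metric space and for s > 0 let K_s(x,y) = ρ(x,y)^{-s} be the Riesz kernel. Then K_s is regular: for every finite unsigned Borel measure μ on Ω, if the potential U_{K_s}^μ is finite and continuous when restricted to supp(μ), then U_{K_s}^μ is finite and continuous on all of Ω. -/
/-!
Write `P` for the potential of `μ` and `F = supp μ`. If `x'` is a point of `F` nearest to `x`,
then `ρ(x', y) ≤ 2 ρ(x, y)` for `y ∈ F`, so `P x ≤ 2^s P x'`; this gives finiteness at once, and
continuity off `F` is dominated convergence. At `x₀ ∈ F`, `P` is lower semicontinuous as a supremum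
of continuous truncated potentials. For upper semicontinuity split `μ` into its parts inside and
outside a small ball `B` around `x₀`: the outer potential is continuous at `x₀`; the inner one is
small at `x₀` because `μ {x₀} = 0`, stays small on `F` near `x₀` because it is the difference of
`P` and the outer potential, and the nearest-point inequality carries the bound off `F`.
-/

open MeasureTheory Metric Set ENNReal

/-- The potential of a measure `μ` with respect to a kernel `K`. -/
noncomputable def pot {Ω : Type*} [MeasurableSpace Ω] (K : Ω → Ω → ℝ≥0∞)
    (μ : Measure Ω) (x : Ω) : ℝ≥0∞ := ∫⁻ y, K x y ∂μ

/-- The support of a Borel measure: points all of whose open neighbourhoods have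
positive measure. -/
def msupp {Ω : Type*} [TopologicalSpace Ω] [MeasurableSpace Ω] (μ : Measure Ω) : Set Ω :=
  {x | ∀ V : Set Ω, IsOpen V → x ∈ V → 0 < μ V}

open Filter Topology

lemma ENNReal.iSup_min_natCast (a : ℝ≥0∞) : ⨆ n : ℕ, min a (n : ℝ≥0∞) = a := by
  rw [← inf_iSup_eq, ENNReal.iSup_natCast, inf_top_eq]

lemma ENNReal.rpow_neg_le_rpow_neg {a b : ℝ≥0∞} {s : ℝ} (hs : 0 ≤ s) (h : a ≤ b) :
    b ^ (-s) ≤ a ^ (-s) := by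
  rw [ENNReal.rpow_neg, ENNReal.rpow_neg]
  exact ENNReal.inv_le_inv.2 (ENNReal.rpow_le_rpow h hs)

lemma ContinuousWithinAt.of_add_of_ne_top {α : Type*} [TopologicalSpace α] {f g : α → ℝ≥0∞}
    {S : Set α} {x : α} (hfg : ContinuousWithinAt (fun z => f z + g z) S x)
    (hg : ContinuousWithinAt g S x) (hg_top : ∀ z, g z ≠ ∞) : ContinuousWithinAt f S x := by
  have h := ENNReal.Tendsto.sub hfg hg (Or.inr (hg_top x))
  simp only [ENNReal.add_sub_cancel_right (hg_top _)] at h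
  exact h

lemma exists_pos_measure_closedBall_lt {Ω : Type*} [MetricSpace Ω] [MeasurableSpace Ω]
    [OpensMeasurableSpace Ω] {ν : Measure Ω} [IsFiniteMeasure ν] {x : Ω} (hx : ν {x} = 0)
    {ε : ℝ≥0∞} (hε : 0 < ε) : ∃ r > 0, ν (closedBall x r) < ε := by
  have hlim : Tendsto (fun r => ν (cthickening r {x})) (𝓝 0) (𝓝 0) :=
    hx ▸ tendsto_measure_cthickening_of_isClosed ⟨1, one_pos, measure_ne_top ν _⟩ isClosed_singleton
  obtain ⟨r, hrε, hr⟩ :=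
    (((hlim.mono_left nhdsWithin_le_nhds).eventually (gt_mem_nhds hε)).and
      (self_mem_nhdsWithin : Ioi (0 : ℝ) ∈ 𝓝[>] 0)).exists
  exact ⟨r, hr, by rwa [← cthickening_singleton x (le_of_lt hr)]⟩

lemma msupp_eq_support {Ω : Type*} [TopologicalSpace Ω] [MeasurableSpace Ω] (μ : Measure Ω) :
    msupp μ = μ.support := by
  ext x
  simp only [msupp, Measure.support_eq_forall_isOpen, mem_ofPred_eq]
  exact forall_congr' fun V => forall_comm

lemma pot_restrict_add_pot_restrict_compl {Ω : Type*} [MeasurableSpace Ω] {K : Ω → Ω → ℝ≥0∞}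
    (μ : Measure Ω) {B : Set Ω} (hB : MeasurableSet B) (x : Ω) :
    pot K (μ.restrict B) x + pot K (μ.restrict Bᶜ) x = pot K μ x :=
  lintegral_add_compl _ hB

section Kernel

variable {Ω : Type*} [TopologicalSpace Ω] [FirstCountableTopology Ω] [MeasurableSpace Ω]
  {K : Ω → Ω → ℝ≥0∞}

lemma continuousAt_pot_of_eventually_ae_le (hK : ∀ y, Continuous (K · y))
    (hKm : ∀ x, Measurable (K x)) (ν : Measure Ω) [IsFiniteMeasure ν] {x₀ : Ω} {C : ℝ≥0∞}
    (hC : C ≠ ∞) (hbound : ∀ᶠ x in 𝓝 x₀, ∀ᵐ y ∂ν, K x y ≤ C) : ContinuousAt (pot K ν) x₀ :=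
  tendsto_lintegral_filter_of_dominated_convergence (fun _ => C) (.of_forall hKm) hbound
    (by simpa using mul_ne_top hC (measure_ne_top ν univ))
    (.of_forall fun y => (hK y).continuousAt)

lemma lowerSemicontinuous_pot (hK : ∀ y, Continuous (K · y)) (hKm : ∀ x, Measurable (K x))
    (ν : Measure Ω) [IsFiniteMeasure ν] : LowerSemicontinuous (pot K ν) := by
  have htrunc (n : ℕ) : Continuous (pot (fun x y => min (K x y) n) ν) :=
    continuous_iff_continuousAt.2 fun _ => continuousAt_pot_of_eventually_ae_le
      (fun y => (hK y).min continuous_const) (fun x => (hKm x).min measurable_const) ν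
      (natCast_ne_top n) (.of_forall fun _ => ae_of_all _ fun _ => min_le_right _ _)
  have hsup : pot K ν = fun x => ⨆ n : ℕ, pot (fun x y => min (K x y) n) ν x := by
    ext x
    simp only [pot]
    rw [← lintegral_iSup (fun n => (hKm x).min measurable_const)
      fun m n hmn y => min_le_min_left _ (Nat.cast_le.2 hmn)]
    simp only [ENNReal.iSup_min_natCast]
  rw [hsup]
  exact lowerSemicontinuous_iSup fun n => (htrunc n).lowerSemicontinuous

end Kernel

section Riesz

variable {Ω : Type*} [MetricSpace Ω] {s : ℝ}

noncomputable def rieszKernel (s : ℝ) (x y : Ω) : ℝ≥0∞ := edist x y ^ (-s)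

lemma continuous_rieszKernel_left (s : ℝ) (y : Ω) : Continuous (rieszKernel s · y) :=
  ENNReal.continuous_rpow_const.comp (continuous_id.edist continuous_const)

lemma rieszKernel_le_two_rpow_mul (hs : 0 ≤ s) {x x' y : Ω} (h : edist x' y ≤ 2 * edist x y) :
    rieszKernel s x y ≤ 2 ^ s * rieszKernel s x' y :=
  calc rieszKernel s x y = 2 ^ s * (2 * edist x y) ^ (-s) := by
        rw [ENNReal.mul_rpow_of_ne_top ofNat_ne_top (edist_ne_top x y), ← mul_assoc,
          ← ENNReal.rpow_add _ _ two_ne_zero ofNat_ne_top, add_neg_cancel, ENNReal.rpow_zero,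
          one_mul, rieszKernel]
    _ ≤ 2 ^ s * rieszKernel s x' y := by gcongr; exact ENNReal.rpow_neg_le_rpow_neg hs h

variable [MeasurableSpace Ω]

lemma pot_rieszKernel_le_of_ae_dist_le (hs : 0 ≤ s) {ν : Measure Ω} {x x' : Ω}
    (h : ∀ᵐ y ∂ν, dist x x' ≤ dist x y) :
    pot (rieszKernel s) ν x ≤ 2 ^ s * pot (rieszKernel s) ν x' := by
  rw [pot, pot, ← lintegral_const_mul' _ _ (rpow_ne_top_of_nonneg hs ofNat_ne_top)]
  refine lintegral_mono_ae (h.mono fun y hy => rieszKernel_le_two_rpow_mul hs ?_)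
  have hx' : edist x' x ≤ edist x y := by
    rw [edist_comm, edist_dist, edist_dist]
    exact ofReal_le_ofReal hy
  calc edist x' y ≤ edist x' x + edist x y := edist_triangle _ _ _
    _ ≤ 2 * edist x y := by rw [two_mul]; gcongr

lemma exists_nearest_pot_rieszKernel_le (hs : 0 ≤ s) {F : Set Ω} (hF : IsCompact F)
    (hne : F.Nonempty) {ν : Measure Ω} (hν : ∀ᵐ y ∂ν, y ∈ F) (x : Ω) :
    ∃ x' ∈ F, (∀ z ∈ F, dist x x' ≤ dist x z) ∧
      pot (rieszKernel s) ν x ≤ 2 ^ s * pot (rieszKernel s) ν x' := by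
  obtain ⟨x', hx'F, hmin⟩ :=
    hF.exists_isMinOn hne (continuous_const.dist continuous_id).continuousOn
  have hmin : ∀ z ∈ F, dist x x' ≤ dist x z := fun z hz => hmin hz
  exact ⟨x', hx'F, hmin, pot_rieszKernel_le_of_ae_dist_le hs (hν.mono hmin)⟩

variable [OpensMeasurableSpace Ω]

lemma measurable_rieszKernel_right (s : ℝ) (x : Ω) : Measurable (rieszKernel s x) :=
  (ENNReal.continuous_rpow_const.comp (continuous_const.edist continuous_id)).measurable

lemma measure_singleton_eq_zero_of_pot_rieszKernel_ne_top (hs : 0 < s) {μ : Measure Ω}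
    {x : Ω} (h : pot (rieszKernel s) μ x ≠ ∞) : μ {x} = 0 := by
  by_contra hx
  refine h (top_le_iff.1 ?_)
  calc ∞ = ∫⁻ y in {x}, rieszKernel s x y ∂μ := by
        rw [lintegral_singleton, rieszKernel, edist_self, zero_rpow_of_neg (neg_neg_of_pos hs),
          top_mul hx]
    _ ≤ pot (rieszKernel s) μ x := setLIntegral_le_lintegral _ _

lemma continuousAt_pot_rieszKernel_of_ae_lt_dist (hs : 0 ≤ s) (ν : Measure Ω)
    [IsFiniteMeasure ν] {x₀ : Ω} {c : ℝ} (hc : 0 < c) (h : ∀ᵐ y ∂ν, c < dist x₀ y) :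
    ContinuousAt (pot (rieszKernel s) ν) x₀ := by
  refine continuousAt_pot_of_eventually_ae_le (continuous_rieszKernel_left s)
    (measurable_rieszKernel_right s) ν (C := ENNReal.ofReal (c / 2) ^ (-s))
    (rpow_ne_top_of_ne_zero (by simpa using hc) ofReal_ne_top) ?_
  filter_upwards [ball_mem_nhds x₀ (half_pos hc)] with x hx
  filter_upwards [h] with y hy
  refine ENNReal.rpow_neg_le_rpow_neg hs ?_
  rw [edist_dist]
  refine ofReal_le_ofReal ?_
  linarith [dist_triangle x₀ x y, mem_ball'.1 hx]

lemma continuousAt_pot_restrict_compl_closedBall (hs : 0 ≤ s) (μ : Measure Ω)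
    [IsFiniteMeasure μ] (x₀ : Ω) {r : ℝ} (hr : 0 < r) :
    ContinuousAt (pot (rieszKernel s) (μ.restrict (closedBall x₀ r)ᶜ)) x₀ :=
  continuousAt_pot_rieszKernel_of_ae_lt_dist hs _ hr <|
    (ae_restrict_mem measurableSet_closedBall.compl).mono fun y hy => by
      simpa [dist_comm] using hy

lemma exists_pos_pot_restrict_closedBall_lt (hs : 0 < s) {μ : Measure Ω} {x₀ : Ω}
    (h : pot (rieszKernel s) μ x₀ ≠ ∞) {ε : ℝ≥0∞} (hε : 0 < ε) :
    ∃ r > 0, pot (rieszKernel s) (μ.restrict (closedBall x₀ r)) x₀ < ε := by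
  have : IsFiniteMeasure (μ.withDensity (rieszKernel s x₀)) := isFiniteMeasure_withDensity h
  obtain ⟨r, hr, hν⟩ := exists_pos_measure_closedBall_lt
    (withDensity_absolutelyContinuous μ (rieszKernel s x₀)
      (measure_singleton_eq_zero_of_pot_rieszKernel_ne_top hs h)) hε
  exact ⟨r, hr, by rwa [withDensity_apply _ measurableSet_closedBall] at hν⟩

end Riesz

section Regularity

variable {Ω : Type*} [MetricSpace Ω] [MeasurableSpace Ω] [OpensMeasurableSpace Ω] {s : ℝ}
  {μ : Measure Ω} [IsFiniteMeasure μ] {F : Set Ω} {x₀ : Ω}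

lemma eventually_pot_restrict_closedBall_le (hs : 0 ≤ s) (hF : IsCompact F)
    (hμF : ∀ᵐ y ∂μ, y ∈ F) (hx₀ : x₀ ∈ F)
    (hcont : ContinuousWithinAt (pot (rieszKernel s) μ) F x₀)
    (hfin : ∀ x, pot (rieszKernel s) μ x ≠ ∞) {r : ℝ} (hr : 0 < r) {δ : ℝ≥0∞}
    (hδ : pot (rieszKernel s) (μ.restrict (closedBall x₀ r)) x₀ < δ) :
    ∀ᶠ x in 𝓝 x₀, pot (rieszKernel s) (μ.restrict (closedBall x₀ r)) x ≤ 2 ^ s * δ := by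
  have hsplit := pot_restrict_add_pot_restrict_compl (K := rieszKernel s) μ
    (measurableSet_closedBall (x := x₀) (ε := r))
  have hnear : ContinuousWithinAt (pot (rieszKernel s) (μ.restrict (closedBall x₀ r))) F x₀ :=
    .of_add_of_ne_top (by simpa only [hsplit] using hcont)
      (continuousAt_pot_restrict_compl_closedBall hs μ x₀ hr).continuousWithinAt
      fun z => ne_top_of_le_ne_top (hfin z) ((hsplit z).symm ▸ le_add_self)
  obtain ⟨η, hη, hball⟩ := nhdsWithin_basis_ball.eventually_iff.1 (hnear.eventually_lt_const hδ)
  filter_upwards [ball_mem_nhds x₀ (half_pos hη)] with x hx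
  obtain ⟨x', hx'F, hx'min, hle⟩ :=
    exists_nearest_pot_rieszKernel_le hs hF ⟨x₀, hx₀⟩ (ae_restrict_of_ae hμF) x
  have hx'η : dist x' x₀ < η := by
    linarith [dist_triangle x' x x₀, dist_comm x x', hx'min x₀ hx₀, mem_ball.1 hx]
  exact hle.trans (by gcongr; exact (hball ⟨hx'η, hx'F⟩).le)

lemma upperSemicontinuousAt_pot_rieszKernel (hs : 0 < s) (hF : IsCompact F)
    (hμF : ∀ᵐ y ∂μ, y ∈ F) (hx₀ : x₀ ∈ F)
    (hcont : ContinuousWithinAt (pot (rieszKernel s) μ) F x₀)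
    (hfin : ∀ x, pot (rieszKernel s) μ x ≠ ∞) :
    UpperSemicontinuousAt (pot (rieszKernel s) μ) x₀ := by
  rw [upperSemicontinuousAt_iff_limsup_le]
  refine ENNReal.le_of_forall_pos_le_add fun ε hε _ => ?_
  have h2s₀ : (2 : ℝ≥0∞) ^ s ≠ 0 := (ENNReal.rpow_pos two_pos ofNat_ne_top).ne'
  have h2s : (2 : ℝ≥0∞) ^ s ≠ ∞ := rpow_ne_top_of_nonneg hs.le ofNat_ne_top
  obtain ⟨r, hr, hsmall⟩ := exists_pos_pot_restrict_closedBall_lt hs (hfin x₀)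
    (ENNReal.div_pos (coe_ne_zero.2 hε.ne') h2s)
  have hsplit := pot_restrict_add_pot_restrict_compl (K := rieszKernel s) μ
    (measurableSet_closedBall (x := x₀) (ε := r))
  have hnear := eventually_pot_restrict_closedBall_le hs.le hF hμF hx₀ hcont hfin hr hsmall
  rw [ENNReal.mul_div_cancel h2s₀ h2s] at hnear
  calc limsup (pot (rieszKernel s) μ) (𝓝 x₀)
      ≤ limsup (fun x => ε + pot (rieszKernel s) (μ.restrict (closedBall x₀ r)ᶜ) x) (𝓝 x₀) :=
        limsup_le_limsup (hnear.mono fun x hx => hsplit x ▸ add_le_add_left hx _)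
    _ = ε + pot (rieszKernel s) (μ.restrict (closedBall x₀ r)ᶜ) x₀ :=
        ((continuousAt_pot_restrict_compl_closedBall hs.le μ x₀ hr).const_add _).limsup_eq
    _ ≤ pot (rieszKernel s) μ x₀ + ε := by
        rw [add_comm, ← hsplit x₀]
        gcongr
        exact le_add_self

lemma continuousAt_pot_rieszKernel_of_mem (hs : 0 < s) (hF : IsCompact F)
    (hμF : ∀ᵐ y ∂μ, y ∈ F) (hx₀ : x₀ ∈ F)
    (hcont : ContinuousWithinAt (pot (rieszKernel s) μ) F x₀)
    (hfin : ∀ x, pot (rieszKernel s) μ x ≠ ∞) : ContinuousAt (pot (rieszKernel s) μ) x₀ :=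
  continuousAt_iff_lower_upperSemicontinuousAt.2
    ⟨(lowerSemicontinuous_pot (continuous_rieszKernel_left s) (measurable_rieszKernel_right s)
      μ).lowerSemicontinuousAt x₀,
    upperSemicontinuousAt_pot_rieszKernel hs hF hμF hx₀ hcont hfin⟩

end Regularity

/-- The Riesz kernel `K_s(x,y) = ρ(x,y)^{-s}` (`s > 0`) on a compact metric space is
regular: if the potential of a finite measure `μ` is finite and continuous on `supp μ`,
then it is finite and continuous on all of `Ω`. -/
theorem riesz_regular
    {Ω : Type*} [MetricSpace Ω] [CompactSpace Ω]
    [MeasurableSpace Ω] [BorelSpace Ω]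
    (s : ℝ) (hs : 0 < s)
    (μ : Measure Ω) [IsFiniteMeasure μ]
    (hcont : ContinuousOn (pot (fun x y => edist x y ^ (-s)) μ) (msupp μ))
    (hfin : ∀ x ∈ msupp μ, pot (fun x y => edist x y ^ (-s)) μ x ≠ ⊤) :
    Continuous (pot (fun x y => edist x y ^ (-s)) μ) ∧
      ∀ x : Ω, pot (fun x y => edist x y ^ (-s)) μ x ≠ ⊤ := by
  rw [msupp_eq_support] at hcont hfin
  rcases eq_or_ne μ 0 with rfl | hμ
  · have hpot : pot (fun x y => edist x y ^ (-s)) (0 : Measure Ω) = 0 :=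
      funext fun _ => lintegral_zero_measure _
    exact ⟨hpot ▸ continuous_const, by simp [hpot]⟩
  have hF : IsCompact μ.support := Measure.isClosed_support.isCompact
  have hμF : ∀ᵐ y ∂μ, y ∈ μ.support := Measure.support_mem_ae
  have hfin' (x : Ω) : pot (rieszKernel s) μ x ≠ ∞ := by
    obtain ⟨x', hx', -, hle⟩ := exists_nearest_pot_rieszKernel_le hs.le hF
      (Measure.nonempty_support hμ) hμF x
    exact ne_top_of_le_ne_top (mul_ne_top (rpow_ne_top_of_nonneg hs.le ofNat_ne_top)
      (hfin x' hx')) hle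
  refine ⟨continuous_iff_continuousAt.2 fun x₀ => ?_, hfin'⟩
  by_cases hx₀ : x₀ ∈ μ.support
  · exact continuousAt_pot_rieszKernel_of_mem hs hF hμF hx₀ (hcont x₀ hx₀) hfin'
  · have hd : 0 < infDist x₀ μ.support :=
      (Measure.isClosed_support.notMem_iff_infDist_pos (Measure.nonempty_support hμ)).1 hx₀
    exact continuousAt_pot_rieszKernel_of_ae_lt_dist hs.le μ (half_pos hd)
      (hμF.mono fun y hy => (half_lt_self hd).trans_le (infDist_le_dist_of_mem hy))
end

section
/- Let (Ω,ρ) be a compact metric space and K : Ω × Ω → [0,∞] a symmetric, extended-continuous, regular kernel. For any Borel probability measure μ with U_K^μ finite on Ω, there exists an increasing sequence of measures (μ_n) with μ_n ≤ μ such that each potential U_K^{μ_n} is continuous on Ω and U_K^{μ_n}(x) → U_K^μ(x) for all x ∈ Ω. -/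
open MeasureTheory Metric Set ENNReal Filter Topology

/-- `K` is regular: whenever the potential of a finite measure is continuous and finite
on the support of the measure, it is continuous and finite on all of `Ω`. -/
def Regular {Ω : Type*} [TopologicalSpace Ω] [MeasurableSpace Ω] (K : Ω → Ω → ℝ≥0∞) : Prop :=
  ∀ ν : Measure Ω, IsFiniteMeasure ν →
    ContinuousOn (pot K ν) (msupp ν) → (∀ x ∈ msupp ν, pot K ν x ≠ ⊤) →
    Continuous (pot K ν) ∧ ∀ x, pot K ν x ≠ ⊤

/-!
Each truncated potential `x ↦ ∫ min (K x y) n dμ` is continuous, so by Egorov's theorem and inner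
regularity `U_K^μ` is continuous on closed sets `D₀ ⊆ D₁ ⊆ ⋯` exhausting `μ`-almost all of `Ω`.
Since `U_K^μ = U_K^{μ|D} + U_K^{μ|Dᶜ}` with both summands lower semicontinuous and finite, each
summand is continuous wherever the sum is; thus `U_K^{μ|Dₙ}` is continuous on `Dₙ ⊇ supp (μ|Dₙ)`,
hence everywhere by regularity of `K`, and it increases to `U_K^μ` by monotone convergence.
-/

open TopologicalSpace

section Semicontinuity

variable {X : Type*} [TopologicalSpace X] {f g : X → ℝ≥0∞} {s : Set X} {x : X}

theorem ENNReal.upperSemicontinuousWithinAt_of_add (hg : LowerSemicontinuousWithinAt g s x)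
    (hgx : g x ≠ ∞) (hfg : UpperSemicontinuousWithinAt (f + g) s x) :
    UpperSemicontinuousWithinAt f s x := by
  intro y hy
  obtain ⟨y', hfy', hy'y⟩ := exists_between hy
  have hg_le : ∀ᶠ x' in 𝓝[s] x, g x ≤ g x' + (y - y') := by
    rcases eq_or_ne (g x) 0 with h0 | h0
    · exact .of_forall fun x' => by simp [h0]
    · filter_upwards [hg _ (ENNReal.sub_lt_self hgx h0 (tsub_pos_of_lt hy'y).ne')] with x' hx'
      exact tsub_le_iff_right.1 hx'.le
  filter_upwards [hfg _ (ENNReal.add_lt_add_right hgx hfy'), hg_le] with x' hsum hle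
  have hgx' : g x' ≠ ∞ := ne_top_of_lt (le_add_self.trans_lt hsum)
  rw [← ENNReal.add_lt_add_iff_right hgx']
  calc f x' + g x' < y' + g x := hsum
    _ ≤ y' + (g x' + (y - y')) := by gcongr
    _ = y + g x' := by rw [add_left_comm, add_tsub_cancel_of_le hy'y.le, add_comm]

theorem ENNReal.continuousWithinAt_of_add (hf : LowerSemicontinuousWithinAt f s x)
    (hg : LowerSemicontinuousWithinAt g s x) (hgx : g x ≠ ∞)
    (hfg : ContinuousWithinAt (f + g) s x) : ContinuousWithinAt f s x :=
  continuousWithinAt_iff_lower_upperSemicontinuousWithinAt.2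
    ⟨hf, upperSemicontinuousWithinAt_of_add hg hgx hfg.upperSemicontinuousWithinAt⟩

end Semicontinuity

section ParametricLIntegral

variable {X α : Type*} [TopologicalSpace X] [FirstCountableTopology X] [MeasurableSpace α]
  {μ : Measure α} {F : X → α → ℝ≥0∞}

theorem lowerSemicontinuous_lintegral (hF : ∀ x, Measurable (F x))
    (hF_lsc : ∀ y, LowerSemicontinuous (F · y)) :
    LowerSemicontinuous fun x => ∫⁻ y, F x y ∂μ :=
  lowerSemicontinuous_iff_le_liminf.2 fun x =>
    calc ∫⁻ y, F x y ∂μ ≤ ∫⁻ y, liminf (F · y) (𝓝 x) ∂μ :=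
          lintegral_mono fun y => lowerSemicontinuous_iff_le_liminf.1 (hF_lsc y) x
      _ ≤ liminf (fun x' => ∫⁻ y, F x' y ∂μ) (𝓝 x) := lintegral_liminf_le hF

theorem continuous_lintegral_of_le_const [IsFiniteMeasure μ] (hF : ∀ x, Measurable (F x))
    (hF_cont : ∀ y, Continuous (F · y)) {c : ℝ≥0∞} (hc : c ≠ ∞) (hFc : ∀ x y, F x y ≤ c) :
    Continuous fun x => ∫⁻ y, F x y ∂μ :=
  continuous_iff_continuousAt.2 fun x =>
    tendsto_lintegral_filter_of_dominated_convergence (fun _ => c) (.of_forall hF)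
      (.of_forall fun x' => .of_forall (hFc x')) (by simpa using ENNReal.mul_ne_top hc (by simp))
      (.of_forall fun y => (hF_cont y).continuousAt)

end ParametricLIntegral

theorem ENNReal.tendsto_min_natCast (a : ℝ≥0∞) :
    Tendsto (fun n : ℕ => min a n) atTop (𝓝 a) := by
  simpa using tendsto_const_nhds.min ENNReal.tendsto_nat_nhds_top

theorem tendsto_setLIntegral_of_monotone {α : Type*} [MeasurableSpace α] {μ : Measure α}
    {s : ℕ → Set α} (hs : Monotone s) (hs_ae : μ (⋃ n, s n)ᶜ = 0) (f : α → ℝ≥0∞) :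
    Tendsto (fun n => ∫⁻ x in s n, f x ∂μ) atTop (𝓝 (∫⁻ x, f x ∂μ)) := by
  rw [← setLIntegral_univ, ← Measure.restrict_congr_set (ae_eq_univ.2 hs_ae),
    setLIntegral_iUnion_of_directed _ hs.directed_le]
  exact tendsto_atTop_iSup fun _ _ hmn =>
    lintegral_mono' (Measure.restrict_mono (hs hmn) le_rfl) le_rfl

section Lusin

variable {X β : Type*} [TopologicalSpace X] [MeasurableSpace X] {μ : Measure X} {g : X → β}

theorem exists_isClosed_continuousOn_of_tendsto [PseudoMetrizableSpace X] [BorelSpace X]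
    [TopologicalSpace β] [PseudoMetrizableSpace β] [SecondCountableTopology β]
    [IsFiniteMeasure μ] {f : ℕ → X → β}
    (hf : ∀ n, Continuous (f n)) (hfg : ∀ x, Tendsto (f · x) atTop (𝓝 (g x)))
    {ε : ℝ≥0∞} (hε : ε ≠ 0) : ∃ C, IsClosed C ∧ μ Cᶜ < ε ∧ ContinuousOn g C := by
  let := pseudoMetrizableSpacePseudoMetric β
  obtain ⟨δ, -, hδ_pos, hδε⟩ := ENNReal.lt_iff_exists_real_btwn.1 (ENNReal.half_pos hε)
  have hf_meas : ∀ n, StronglyMeasurable (f n) := fun n => (hf n).stronglyMeasurable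
  obtain ⟨t, ht, htμ, hunif⟩ := tendstoUniformlyOn_of_ae_tendsto' (μ := μ) hf_meas
    (stronglyMeasurable_of_tendsto _ hf_meas (tendsto_pi_nhds.2 hfg)) (.of_forall hfg)
    (ENNReal.ofReal_pos.1 hδ_pos)
  obtain ⟨C, hCt, hC, hCμ⟩ := ht.compl.exists_isClosed_sdiff_lt (measure_ne_top μ _)
    (ENNReal.half_pos hε).ne'
  refine ⟨C, hC, ?_, (hunif.continuousOn (.of_forall fun n => (hf n).continuousOn)).mono hCt⟩
  calc μ Cᶜ ≤ μ (t ∪ tᶜ \ C) := measure_mono fun x hx => by by_cases x ∈ t <;> simp_all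
    _ ≤ μ t + μ (tᶜ \ C) := measure_union_le _ _
    _ < ε / 2 + ε / 2 := ENNReal.add_lt_add (htμ.trans_lt hδε) hCμ
    _ = ε := ENNReal.add_halves ε

theorem exists_monotone_isClosed_continuousOn [TopologicalSpace β]
    (hg : ∀ ε ≠ 0, ∃ C, IsClosed C ∧ μ Cᶜ < ε ∧ ContinuousOn g C) :
    ∃ D : ℕ → Set X, Monotone D ∧ (∀ n, IsClosed (D n)) ∧ (∀ n, ContinuousOn g (D n)) ∧
      μ (⋃ n, D n)ᶜ = 0 := by
  choose C hC hCμ hgC using fun n : ℕ => hg (n : ℝ≥0∞)⁻¹ (by simp)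
  have hD : ∀ n, IsClosed (accumulate C n) ∧ ContinuousOn g (accumulate C n) := by
    intro n
    induction n with
    | zero => simpa [accumulate_def] using ⟨hC 0, hgC 0⟩
    | succ n ih =>
      rw [accumulate_succ]
      exact ⟨ih.1.union (hC _), ih.2.union_of_isClosed (hgC _) ih.1 (hC _)⟩
  refine ⟨accumulate C, monotone_accumulate, fun n => (hD n).1, fun n => (hD n).2, ?_⟩
  by_contra h
  obtain ⟨n, hn⟩ := ENNReal.exists_inv_nat_lt h
  refine (hCμ n).not_ge (hn.le.trans (measure_mono (compl_subset_compl.2 ?_)))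
  exact (subset_iUnion C n).trans (iUnion_accumulate).superset

end Lusin

section Potential

variable {Ω : Type*} [MeasurableSpace Ω] {K : Ω → Ω → ℝ≥0∞} {μ : Measure Ω} {s : Set Ω}

theorem pot_mono {ν : Measure Ω} (h : ν ≤ μ) (x : Ω) : pot K ν x ≤ pot K μ x :=
  lintegral_mono' h le_rfl

theorem pot_restrict_add_pot_restrict_compl_s5 (hs : MeasurableSet s) :
    pot K (μ.restrict s) + pot K (μ.restrict sᶜ) = pot K μ :=
  funext fun _ => lintegral_add_compl _ hs

variable [TopologicalSpace Ω] [OpensMeasurableSpace Ω]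

theorem msupp_restrict_subset (hs : IsClosed s) : msupp (μ.restrict s) ⊆ s := fun x hx => by
  by_contra hxs
  simpa [Measure.restrict_apply' hs.measurableSet] using hx sᶜ hs.isOpen_compl hxs

variable (hK : Continuous (Function.uncurry K))
include hK

theorem lowerSemicontinuous_pot_s5 [FirstCountableTopology Ω] (ν : Measure Ω) :
    LowerSemicontinuous (pot K ν) :=
  lowerSemicontinuous_lintegral (fun x => (hK.uncurry_left x).measurable)
    fun y => (hK.uncurry_right y).lowerSemicontinuous

theorem continuousOn_pot_restrict [FirstCountableTopology Ω] (hs : MeasurableSet s)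
    (hcont : ContinuousOn (pot K μ) s) (hfin : ∀ x ∈ s, pot K μ x ≠ ∞) :
    ContinuousOn (pot K (μ.restrict s)) s := fun x hx =>
  ENNReal.continuousWithinAt_of_add ((lowerSemicontinuous_pot_s5 hK _).lowerSemicontinuousWithinAt _ _)
    ((lowerSemicontinuous_pot_s5 hK (μ.restrict sᶜ)).lowerSemicontinuousWithinAt _ _)
    (ne_top_of_le_ne_top (hfin x hx) (pot_mono Measure.restrict_le_self x))
    (by rw [pot_restrict_add_pot_restrict_compl_s5 hs]; exact hcont x hx)

theorem continuous_pot_restrict [FirstCountableTopology Ω] [IsFiniteMeasure μ] (hreg : Regular K)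
    (hs : IsClosed s) (hcont : ContinuousOn (pot K μ) s) (hfin : ∀ x, pot K μ x ≠ ∞) :
    Continuous (pot K (μ.restrict s)) :=
  (hreg _ inferInstance
    ((continuousOn_pot_restrict hK hs.measurableSet hcont fun x _ => hfin x).mono
      (msupp_restrict_subset hs))
    fun x _ => ne_top_of_le_ne_top (hfin x) (pot_mono Measure.restrict_le_self x)).1

theorem exists_isClosed_continuousOn_pot [PseudoMetrizableSpace Ω] [BorelSpace Ω]
    [IsFiniteMeasure μ] {ε : ℝ≥0∞} (hε : ε ≠ 0) :
    ∃ C, IsClosed C ∧ μ Cᶜ < ε ∧ ContinuousOn (pot K μ) C := by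
  have hK_trunc_meas (n : ℕ) (x : Ω) : Measurable fun y => min (K x y) n :=
    (hK.uncurry_left x).measurable.min measurable_const
  refine exists_isClosed_continuousOn_of_tendsto (f := fun n x => ∫⁻ y, min (K x y) n ∂μ)
    (fun n => ?_) (fun x => ?_) hε
  · exact continuous_lintegral_of_le_const (hK_trunc_meas n)
      (fun y => (hK.uncurry_right y).min continuous_const) (natCast_ne_top n)
      fun _ _ => min_le_right _ _
  · exact lintegral_tendsto_of_tendsto_of_monotone (fun n => (hK_trunc_meas n x).aemeasurable)
      (.of_forall fun _ _ _ hmn => min_le_min_left _ (Nat.cast_le.2 hmn))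
      (.of_forall fun _ => ENNReal.tendsto_min_natCast _)

end Potential

theorem exists_increasing_continuous_potentials_general
    {Ω : Type*} [MetricSpace Ω]
    [MeasurableSpace Ω] [BorelSpace Ω]
    (K : Ω → Ω → ℝ≥0∞)
    (hKcont : Continuous (Function.uncurry K)) (hreg : Regular K)
    (μ : Measure Ω) [IsProbabilityMeasure μ]
    (hfin : ∀ x : Ω, pot K μ x ≠ ⊤) :
    ∃ μs : ℕ → Measure Ω, Monotone μs ∧ (∀ n, μs n ≤ μ) ∧
      (∀ n, Continuous (pot K (μs n))) ∧
      ∀ x : Ω, Tendsto (fun n => pot K (μs n) x) atTop (𝓝 (pot K μ x)) := by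
  obtain ⟨D, hD_mono, hD_closed, hD_cont, hD_ae⟩ :=
    exists_monotone_isClosed_continuousOn fun _ hε =>
      exists_isClosed_continuousOn_pot (μ := μ) hKcont hε
  exact ⟨fun n => μ.restrict (D n), fun _ _ hmn => Measure.restrict_mono (hD_mono hmn) le_rfl,
    fun n => Measure.restrict_le_self,
    fun n => continuous_pot_restrict hKcont hreg (hD_closed n) (hD_cont n) hfin,
    fun x => tendsto_setLIntegral_of_monotone hD_mono hD_ae (K x)⟩

/-- For a regular symmetric extended-continuous kernel `K` and a probability measure `μ`
with everywhere finite potential, there is an increasing sequence of measures `μ_n ≤ μ`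
whose potentials are continuous and converge pointwise to the potential of `μ`. -/
theorem exists_increasing_continuous_potentials
    {Ω : Type*} [MetricSpace Ω] [CompactSpace Ω]
    [MeasurableSpace Ω] [BorelSpace Ω]
    (K : Ω → Ω → ℝ≥0∞) (hsym : ∀ x y, K x y = K y x)
    (hKcont : Continuous (Function.uncurry K)) (hreg : Regular K)
    (μ : Measure Ω) [IsProbabilityMeasure μ]
    (hfin : ∀ x : Ω, pot K μ x ≠ ⊤) :
    ∃ μs : ℕ → Measure Ω, Monotone μs ∧ (∀ n, μs n ≤ μ) ∧
      (∀ n, Continuous (pot K (μs n))) ∧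
      ∀ x : Ω, Tendsto (fun n => pot K (μs n) x) atTop (𝓝 (pot K μ x)) :=
  exists_increasing_continuous_potentials_general K hKcont hreg μ hfin
end

section
/- Let (Ω,ρ) be a compact metric space and K : Ω × Ω → [0,∞] a symmetric extended-continuous kernel. Suppose μ is a minimizing Borel probability measure for the energy I_K with I_K(μ) < ∞. Then U_K^μ(x) ≤ I_K(μ) for every x ∈ supp(μ). -/
/-!
Removing the fraction `1 - a` of the mass of `μ` on a Borel set `B` and renormalising gives a
probability measure whose energy is, by minimality, at least `I_K(μ)`. Both sides are quadratic
in `a`, and comparing them as `a → 1` gives `∫_B U_K^μ dμ ≤ I_K(μ) μ(B)` for every Borel `B`,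
so `U_K^μ ≤ I_K(μ)` holds `μ`-almost everywhere. By Fatou's lemma `U_K^μ` is lower
semicontinuous, so `{U_K^μ > I_K(μ)}` is an open `μ`-null set and misses the support.
-/

open MeasureTheory Metric Set ENNReal

/-- The energy of a measure `μ` with respect to a kernel `K`. -/
noncomputable def energy {Ω : Type*} [MeasurableSpace Ω] (K : Ω → Ω → ℝ≥0∞)
    (μ : Measure Ω) : ℝ≥0∞ := ∫⁻ x, ∫⁻ y, K x y ∂μ ∂μ

open Filter Topology

noncomputable def mutualEnergy {Ω : Type*} [MeasurableSpace Ω] (K : Ω → Ω → ℝ≥0∞)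
    (ρ σ : Measure Ω) : ℝ≥0∞ := ∫⁻ x, ∫⁻ y, K x y ∂σ ∂ρ

section MutualEnergy

variable {Ω : Type*} [MeasurableSpace Ω] {K : Ω → Ω → ℝ≥0∞}

theorem energy_eq_mutualEnergy (μ : Measure Ω) : energy K μ = mutualEnergy K μ μ := rfl

theorem mutualEnergy_add_left (ρ₁ ρ₂ σ : Measure Ω) :
    mutualEnergy K (ρ₁ + ρ₂) σ = mutualEnergy K ρ₁ σ + mutualEnergy K ρ₂ σ :=
  lintegral_add_measure _ _ _

theorem mutualEnergy_add_right (hK : Measurable (Function.uncurry K)) (ρ σ₁ σ₂ : Measure Ω)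
    [SFinite σ₁] :
    mutualEnergy K ρ (σ₁ + σ₂) = mutualEnergy K ρ σ₁ + mutualEnergy K ρ σ₂ := by
  simp only [mutualEnergy, lintegral_add_measure]
  exact lintegral_add_left hK.lintegral_prod_right _

theorem mutualEnergy_smul_left (c : ℝ≥0∞) (ρ σ : Measure Ω) :
    mutualEnergy K (c • ρ) σ = c * mutualEnergy K ρ σ :=
  lintegral_smul_measure _ _

theorem mutualEnergy_smul_right (hK : Measurable (Function.uncurry K)) (c : ℝ≥0∞)
    (ρ σ : Measure Ω) [SFinite σ] :
    mutualEnergy K ρ (c • σ) = c * mutualEnergy K ρ σ := by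
  simp only [mutualEnergy, lintegral_smul_measure, smul_eq_mul]
  exact lintegral_const_mul c hK.lintegral_prod_right

theorem mutualEnergy_comm (hK : Measurable (Function.uncurry K)) (hsym : ∀ x y, K x y = K y x)
    (ρ σ : Measure Ω) [SFinite ρ] [SFinite σ] :
    mutualEnergy K ρ σ = mutualEnergy K σ ρ := by
  rw [mutualEnergy, lintegral_lintegral_swap hK.aemeasurable]
  exact lintegral_congr fun y => lintegral_congr fun x => hsym x y

theorem mutualEnergy_mono {ρ ρ' σ σ' : Measure Ω} (hρ : ρ ≤ ρ') (hσ : σ ≤ σ') :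
    mutualEnergy K ρ σ ≤ mutualEnergy K ρ' σ' :=
  (lintegral_mono fun _ => lintegral_mono' hσ le_rfl).trans (lintegral_mono' hρ le_rfl)

theorem energy_smul (hK : Measurable (Function.uncurry K)) (c : ℝ≥0∞) (ρ : Measure Ω)
    [SFinite ρ] : energy K (c • ρ) = c ^ 2 * energy K ρ := by
  rw [energy_eq_mutualEnergy, mutualEnergy_smul_left, mutualEnergy_smul_right hK, ← mul_assoc,
    sq, energy_eq_mutualEnergy]

theorem energy_add_smul (hK : Measurable (Function.uncurry K)) (hsym : ∀ x y, K x y = K y x)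
    (a : ℝ≥0∞) (ρ σ : Measure Ω) [SFinite ρ] [SFinite σ] :
    energy K (ρ + a • σ) =
      energy K ρ + 2 * a * mutualEnergy K ρ σ + a ^ 2 * energy K σ := by
  simp only [energy_eq_mutualEnergy, mutualEnergy_add_left, mutualEnergy_add_right hK,
    mutualEnergy_smul_left, mutualEnergy_smul_right hK, mutualEnergy_comm hK hsym σ ρ]
  ring

end MutualEnergy

theorem lowerSemicontinuous_pot_s8 {Ω : Type*} [TopologicalSpace Ω] [FirstCountableTopology Ω]
    [MeasurableSpace Ω] {K : Ω → Ω → ℝ≥0∞} (hK : ∀ y, LowerSemicontinuous (K · y))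
    (hmeas : ∀ x, Measurable (K x)) (μ : Measure Ω) : LowerSemicontinuous (pot K μ) := by
  refine lowerSemicontinuous_iff_le_liminf.2 fun x => ?_
  calc pot K μ x ≤ ∫⁻ y, liminf (K · y) (𝓝 x) ∂μ :=
        lintegral_mono fun y => lowerSemicontinuous_iff_le_liminf.1 (hK y) x
    _ ≤ liminf (pot K μ) (𝓝 x) := lintegral_liminf_le hmeas

theorem LowerSemicontinuous.le_of_mem_msupp {Ω β : Type*} [TopologicalSpace Ω]
    [MeasurableSpace Ω] [LinearOrder β] {f : Ω → β} (hf : LowerSemicontinuous f)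
    {μ : Measure Ω} {c : β} (h : ∀ᵐ x ∂μ, f x ≤ c) {x : Ω} (hx : x ∈ msupp μ) : f x ≤ c := by
  by_contra! hlt
  refine (hx _ (hf.isOpen_preimage c) hlt).ne' ?_
  exact measure_mono_null (fun y hy => not_le.2 hy) (ae_iff.1 h)

theorem energy_mul_measure_univ_sq_le {Ω : Type*} [MeasurableSpace Ω] {K : Ω → Ω → ℝ≥0∞}
    (hK : Measurable (Function.uncurry K)) {μ : Measure Ω}
    (hmin : ∀ ν : Measure Ω, IsProbabilityMeasure ν → energy K μ ≤ energy K ν)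
    (ρ : Measure Ω) [IsFiniteMeasure ρ] : energy K μ * ρ univ ^ 2 ≤ energy K ρ := by
  rcases eq_zero_or_neZero ρ with rfl | _
  · simp
  have hρ : ρ univ ^ 2 ≠ 0 := pow_ne_zero 2 (NeZero.ne (ρ univ))
  rw [mul_comm, ENNReal.mul_le_iff_le_inv hρ (by finiteness), ENNReal.inv_pow,
    ← energy_smul hK]
  exact hmin _ inferInstance

theorem add_le_mul_of_forall_mul_sq_le {x y z p m : ℝ} (hpm : p + m = 1)
    (h : ∀ a ∈ Ioo (0 : ℝ) 1, (x + 2 * y + z) * (p + a * m) ^ 2 ≤ x + 2 * a * y + a ^ 2 * z) :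
    y + z ≤ (x + 2 * y + z) * m := by
  set I := x + 2 * y + z
  have hlim : Tendsto (fun a : ℝ => (1 - a) * (z - I * m ^ 2) / 2) (𝓝[<] 1) (𝓝 0) := by
    have : Continuous fun a : ℝ => (1 - a) * (z - I * m ^ 2) / 2 := by fun_prop
    simpa using (this.tendsto' 1 _ (by simp)).mono_left nhdsWithin_le_nhds
  refine sub_nonpos.1 (ge_of_tendsto hlim ?_)
  filter_upwards [Ioo_mem_nhdsLT (show (0 : ℝ) < 1 by norm_num)] with a ha
  have ht : 0 < 1 - a := sub_pos.2 ha.2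
  have key : (1 - a) * (2 * (y + z - I * m) - (1 - a) * (z - I * m ^ 2)) ≤ (1 - a) * 0 := by
    obtain rfl : p = 1 - m := by linarith
    linear_combination h a ha
  linarith [le_of_mul_le_mul_left key ht]

theorem setLIntegral_pot_le_energy_mul {Ω : Type*} [MeasurableSpace Ω] {K : Ω → Ω → ℝ≥0∞}
    (hK : Measurable (Function.uncurry K)) (hsym : ∀ x y, K x y = K y x)
    {μ : Measure Ω} [IsProbabilityMeasure μ]
    (hmin : ∀ ν : Measure Ω, IsProbabilityMeasure ν → energy K μ ≤ energy K ν)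
    (hfin : energy K μ ≠ ⊤) {B : Set Ω} (hB : MeasurableSet B) :
    ∫⁻ x in B, pot K μ x ∂μ ≤ energy K μ * μ B := by
  set g := μ.restrict Bᶜ
  set b := μ.restrict B
  have hμ : g + b = μ := by rw [add_comm]; exact Measure.restrict_add_restrict_compl hB
  have hI : energy K μ = energy K g + 2 * mutualEnergy K g b + energy K b := by
    simpa [hμ] using energy_add_smul hK hsym 1 g b
  have hP : ∫⁻ x in B, pot K μ x ∂μ = mutualEnergy K g b + energy K b := by
    change mutualEnergy K b μ = _
    rw [← hμ, mutualEnergy_add_right hK, mutualEnergy_comm hK hsym b g, energy_eq_mutualEnergy]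
  have hfin' : ∀ {ρ σ : Measure Ω}, ρ ≤ μ → σ ≤ μ → mutualEnergy K ρ σ ≠ ⊤ :=
    fun hρ hσ => ne_top_of_le_ne_top hfin (mutualEnergy_mono hρ hσ)
  have hX : energy K g ≠ ⊤ := hfin' Measure.restrict_le_self Measure.restrict_le_self
  have hY : mutualEnergy K g b ≠ ⊤ := hfin' Measure.restrict_le_self Measure.restrict_le_self
  have hZ : energy K b ≠ ⊤ := hfin' Measure.restrict_le_self Measure.restrict_le_self
  have hquad : ∀ a ∈ Ioo (0 : ℝ) 1,
      ((energy K g).toReal + 2 * (mutualEnergy K g b).toReal + (energy K b).toReal) *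
          (μ.real Bᶜ + a * μ.real B) ^ 2 ≤
        (energy K g).toReal + 2 * a * (mutualEnergy K g b).toReal +
          a ^ 2 * (energy K b).toReal := by
    intro a ha
    have := b.smul_finite (ENNReal.ofReal_ne_top (r := a))
    have h := energy_mul_measure_univ_sq_le hK hmin (g + ENNReal.ofReal a • b)
    rw [energy_add_smul hK hsym, hI] at h
    simpa [g, b, ENNReal.toReal_add, ENNReal.add_eq_top, ENNReal.mul_eq_top, hX, hY, hZ,
      measureReal_def, ha.1.le] using ENNReal.toReal_mono (by finiteness) h
  have hreal := add_le_mul_of_forall_mul_sq_le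
    (by simpa [add_comm] using measureReal_add_measureReal_compl (μ := μ) hB) hquad
  rw [hP, hI]
  refine (ENNReal.toReal_le_toReal (by finiteness) (by finiteness)).1 ?_
  simpa [ENNReal.toReal_add, ENNReal.add_eq_top, ENNReal.mul_eq_top, hX, hY, hZ,
    measureReal_def] using hreal

theorem ae_pot_le_energy {Ω : Type*} [MeasurableSpace Ω] {K : Ω → Ω → ℝ≥0∞}
    (hK : Measurable (Function.uncurry K)) (hsym : ∀ x y, K x y = K y x)
    {μ : Measure Ω} [IsProbabilityMeasure μ]
    (hmin : ∀ ν : Measure Ω, IsProbabilityMeasure ν → energy K μ ≤ energy K ν)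
    (hfin : energy K μ ≠ ⊤) : ∀ᵐ x ∂μ, pot K μ x ≤ energy K μ :=
  ae_le_of_forall_setLIntegral_le_of_sigmaFinite hK.lintegral_prod_right fun B hB _ => by
    rw [setLIntegral_const]
    exact setLIntegral_pot_le_energy_mul hK hsym hmin hfin hB

/-- If `μ` is an energy-minimizing probability measure of finite energy for a symmetric
extended-continuous kernel on a compact metric space, then its potential is bounded by
its energy on the support of `μ`. -/
theorem potential_le_energy_on_support
    {Ω : Type*} [MetricSpace Ω] [CompactSpace Ω]
    [MeasurableSpace Ω] [BorelSpace Ω]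
    (K : Ω → Ω → ℝ≥0∞) (hsym : ∀ x y, K x y = K y x)
    (hKcont : Continuous (Function.uncurry K))
    (μ : Measure Ω) [IsProbabilityMeasure μ]
    (hmin : ∀ ν : Measure Ω, IsProbabilityMeasure ν → energy K μ ≤ energy K ν)
    (hfin : energy K μ ≠ ⊤) :
    ∀ x ∈ msupp μ, pot K μ x ≤ energy K μ := by
  have hK : Measurable (Function.uncurry K) := hKcont.measurable
  have hpot : LowerSemicontinuous (pot K μ) :=
    lowerSemicontinuous_pot_s8
      (fun y => (hKcont.comp (Continuous.prodMk_left y)).lowerSemicontinuous)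
      (fun _ => hK.of_uncurry_left) μ
  exact fun x hx => hpot.le_of_mem_msupp (ae_pot_le_energy hK hsym hmin hfin) hx
end

section
/- Let (Ω,ρ) be a compact metric space and K a symmetric nonnegative extended-continuous kernel. If μ and ν are two approximately K-invariant Borel probability measures, then I_K(μ) = I_K(ν). -/
open MeasureTheory Metric Set ENNReal

/-- A set has `K`-capacity zero if every probability measure supported in it has
infinite `K`-energy. -/
def CapacityZero {Ω : Type*} [TopologicalSpace Ω] [MeasurableSpace Ω]
    (K : Ω → Ω → ℝ≥0∞) (E : Set Ω) : Prop :=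
  ∀ ν : Measure Ω, IsProbabilityMeasure ν → msupp ν ⊆ E → energy K ν = ⊤

/-- A probability measure `μ` is approximately `K`-invariant if it has finite energy and
its potential equals a finite constant `M` outside a set of `K`-capacity zero. -/
def ApproxInvariant {Ω : Type*} [TopologicalSpace Ω] [MeasurableSpace Ω]
    (K : Ω → Ω → ℝ≥0∞) (μ : Measure Ω) : Prop :=
  IsProbabilityMeasure μ ∧ energy K μ ≠ ⊤ ∧
    ∃ M : ℝ≥0∞, M ≠ ⊤ ∧ CapacityZero K {x | pot K μ x ≠ M}


/-!
Integrating the potential of an approximately invariant `μ` against any probability measure `ν`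
of finite energy gives the constant `M_μ`, because `ν` does not charge the exceptional set of
capacity zero. Taking `ν = μ` shows `I(μ) = M_μ`, and by symmetry of `K` (Tonelli)
`∫ U^μ dν = ∫ U^ν dμ`, so `M_μ = M_ν`.
-/

open scoped ProbabilityTheory

section Energy

variable {Ω : Type*} [MeasurableSpace Ω] (K : Ω → Ω → ℝ≥0∞)

lemma energy_mono {μ ν : Measure Ω} (h : μ ≤ ν) : energy K μ ≤ energy K ν :=
  lintegral_mono' h fun _ => lintegral_mono' h le_rfl

lemma energy_smul_s10 (μ : Measure Ω) {c : ℝ≥0∞} (hc : c ≠ ⊤) :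
    energy K (c • μ) = c * c * energy K μ := by
  simp only [energy, lintegral_smul_measure, smul_eq_mul]
  rw [lintegral_const_mul' _ _ hc, mul_assoc]

lemma energy_cond_ne_top {μ : Measure Ω} (hμ : energy K μ ≠ ⊤) {s : Set Ω} (hs : μ s ≠ 0) :
    energy K μ[|s] ≠ ⊤ := by
  have hc : (μ s)⁻¹ ≠ ⊤ := ENNReal.inv_ne_top.mpr hs
  rw [ProbabilityTheory.cond, energy_smul_s10 K _ hc]
  exact mul_ne_top (mul_ne_top hc hc)
    (ne_top_of_le_ne_top hμ (energy_mono K Measure.restrict_le_self))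

lemma lintegral_pot_comm (hsym : ∀ x y, K x y = K y x) (hK : Measurable (Function.uncurry K))
    (μ ν : Measure Ω) [SFinite μ] [SFinite ν] :
    ∫⁻ x, pot K μ x ∂ν = ∫⁻ x, pot K ν x ∂μ := by
  simp only [pot]
  rw [lintegral_lintegral_swap hK.aemeasurable]
  exact lintegral_congr fun y => lintegral_congr fun x => hsym x y

end Energy

lemma msupp_subset_of_measure_compl_eq_zero {Ω : Type*} [TopologicalSpace Ω] [MeasurableSpace Ω]
    {μ : Measure Ω} {F : Set Ω} (hF : IsClosed F) (h : μ Fᶜ = 0) : msupp μ ⊆ F := by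
  intro x hx
  by_contra hxF
  exact (hx Fᶜ hF.isOpen_compl hxF).ne' h

lemma CapacityZero.measure_eq_zero {Ω : Type*} [TopologicalSpace Ω] [MeasurableSpace Ω]
    [OpensMeasurableSpace Ω] {K : Ω → Ω → ℝ≥0∞} {E : Set Ω} (hcap : CapacityZero K E)
    (hE : MeasurableSet E) (μ : Measure Ω) [IsFiniteMeasure μ] [μ.WeaklyRegular]
    (hμ : energy K μ ≠ ⊤) : μ E = 0 := by
  by_contra hE0
  obtain ⟨F, hFE, hF, hF0⟩ :=
    hE.exists_lt_isClosed_of_ne_top (measure_ne_top μ E) (pos_iff_ne_zero.mpr hE0)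
  have hsupp : msupp μ[|F] ⊆ E := by
    refine (msupp_subset_of_measure_compl_eq_zero hF ?_).trans hFE
    simp [ProbabilityTheory.cond_apply hF.measurableSet]
  exact energy_cond_ne_top K hμ hF0.ne'
    (hcap _ (ProbabilityTheory.cond_isProbabilityMeasure hF0.ne') hsupp)

lemma ApproxInvariant.exists_lintegral_pot_eq {Ω : Type*} [TopologicalSpace Ω]
    [MeasurableSpace Ω] [OpensMeasurableSpace Ω] {K : Ω → Ω → ℝ≥0∞}
    (hK : Measurable (Function.uncurry K)) {μ : Measure Ω} (hμ : ApproxInvariant K μ) :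
    ∃ M, ∀ ν : Measure Ω, ∀ [IsProbabilityMeasure ν] [ν.WeaklyRegular],
      energy K ν ≠ ⊤ → ∫⁻ x, pot K μ x ∂ν = M := by
  obtain ⟨_, -, M, -, hcap⟩ := hμ
  have hpot : Measurable (pot K μ) := hK.lintegral_prod_right
  refine ⟨M, fun ν _ _ hν => ?_⟩
  have hae : pot K μ =ᵐ[ν] fun _ => M :=
    hcap.measure_eq_zero (hpot (measurableSet_singleton M)).compl ν hν
  simp [lintegral_congr_ae hae]

/-- Any two approximately `K`-invariant probability measures have equal energy. -/
theorem approxInvariant_energy_eq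
    {Ω : Type*} [MetricSpace Ω] [CompactSpace Ω]
    [MeasurableSpace Ω] [BorelSpace Ω]
    (K : Ω → Ω → ℝ≥0∞) (hsym : ∀ x y, K x y = K y x)
    (hKcont : Continuous (Function.uncurry K))
    (μ ν : Measure Ω)
    (hμ : ApproxInvariant K μ) (hν : ApproxInvariant K ν) :
    energy K μ = energy K ν := by
  have hK := hKcont.measurable
  obtain ⟨Mμ, hMμ⟩ := hμ.exists_lintegral_pot_eq hK
  obtain ⟨Mν, hMν⟩ := hν.exists_lintegral_pot_eq hK
  obtain ⟨_, hμfin, -⟩ := hμ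
  obtain ⟨_, hνfin, -⟩ := hν
  calc energy K μ = Mμ := hMμ μ hμfin
    _ = ∫⁻ x, pot K μ x ∂ν := (hMμ ν hνfin).symm
    _ = ∫⁻ x, pot K ν x ∂μ := lintegral_pot_comm K hsym hK μ ν
    _ = Mν := hMν μ hμfin
    _ = energy K ν := (hMν ν hνfin).symm
end

section
/- On the flat d-torus 𝕋^d, for s = −2 a Borel probability measure μ minimizes the Riesz energy I_{K_{-2}}(μ) = −∫∫ ρ(x,y)² dμ(x) dμ(y) if and only if for each coordinate 1 ≤ i ≤ d, the pushforward μ_i of μ under the i-th coordinate projection to 𝕊¹ is of the form (δ_z + δ_{−z})/2 for some z ∈ 𝕊¹ (where −z denotes the antipodal point). -/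
open MeasureTheory Set ENNReal

noncomputable section

instance : Fact (0 < 2 * Real.pi) := ⟨by positivity⟩

/-- The flat `d`-torus `(ℝ/2πℤ)^d = (𝕊¹)^d`. -/
abbrev Torus (d : ℕ) := Fin d → AddCircle (2 * Real.pi)

/-- The flat (Euclidean quotient) metric on the torus. -/
def tdist {d : ℕ} (x y : Torus d) : ℝ := Real.sqrt (∑ i, dist (x i) (y i) ^ 2)

/-- The Riesz energy for `s = -2`: `I(μ) = −∫∫ ρ(x,y)² dμ dμ`. -/
def negSqEnergy {d : ℕ} (μ : Measure (Torus d)) : ℝ :=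
  -∫ x, ∫ y, tdist x y ^ 2 ∂μ ∂μ

/-!
On the circle, `t ^ 2 ≤ π ^ 2 / 2 * (1 - cos t)` for `|t| ≤ π` (Jordan's inequality applied to
`sin (t / 2)`), with equality only for `t = 0` and `|t| = π`. Integrating against `ν ⊗ ν` gives
`∫∫ d² ≤ π ^ 2 / 2 * (1 - |ν̂(1)|²) ≤ π ^ 2 / 2`, and equality forces `ν` to be carried by a pair
`{z, z + π}`; since `a • δ_z + b • δ_{z + π}` has energy `2 a b π ^ 2`, equality holds exactly for
`a = b = 1/2`. On the torus the squared flat distance is a sum over coordinates, so the energy is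
minus the sum of the circle energies of the marginals; the diagonal copy of `(δ_0 + δ_π) / 2`
attains the resulting lower bound `-d π ^ 2 / 2`.
-/

open Real

theorem sq_pi_mul_sin_abs_div_two (t : ℝ) :
    (π * sin (|t| / 2)) ^ 2 = π ^ 2 / 2 * (1 - cos t) := by
  rw [mul_pow, sin_sq_eq_half_sub, mul_div_cancel₀ _ two_ne_zero, cos_abs]; ring

theorem sq_le_pi_sq_div_two_mul_one_sub_cos {t : ℝ} (ht : |t| ≤ π) :
    t ^ 2 ≤ π ^ 2 / 2 * (1 - cos t) := by
  have hjordan : 2 / π * (|t| / 2) ≤ sin (|t| / 2) := mul_le_sin (by positivity) (by linarith)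
  have hsin : |t| ≤ π * sin (|t| / 2) := by
    rwa [div_mul_eq_mul_div, div_le_iff₀' pi_pos, mul_div_cancel₀ _ two_ne_zero] at hjordan
  rw [← sq_abs, ← sq_pi_mul_sin_abs_div_two]
  exact pow_le_pow_left₀ (abs_nonneg t) hsin 2

theorem sq_lt_pi_sq_div_two_mul_one_sub_cos {t : ℝ} (h₀ : t ≠ 0) (ht : |t| < π) :
    t ^ 2 < π ^ 2 / 2 * (1 - cos t) := by
  have hjordan : 2 / π * (|t| / 2) < sin (|t| / 2) := mul_lt_sin (by positivity) (by linarith)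
  have hsin : |t| < π * sin (|t| / 2) := by
    rwa [div_mul_eq_mul_div, div_lt_iff₀' pi_pos, mul_div_cancel₀ _ two_ne_zero] at hjordan
  rw [← sq_abs, ← sq_pi_mul_sin_abs_div_two]
  exact pow_lt_pow_left₀ hsin (abs_nonneg t) two_ne_zero

namespace Real.Angle

theorem norm_eq_abs_toReal (θ : Angle) : ‖θ‖ = |θ.toReal| := by
  conv_lhs => rw [← coe_toReal θ]
  refine (AddCircle.norm_coe_eq_abs_iff (p := 2 * π) two_pi_pos.ne').mpr ?_
  rw [abs_of_pos two_pi_pos, mul_div_cancel_left₀ _ two_ne_zero]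
  exact abs_toReal_le_pi θ

theorem norm_sq_le_pi_sq_div_two_mul_one_sub_cos (θ : Angle) :
    ‖θ‖ ^ 2 ≤ π ^ 2 / 2 * (1 - cos θ) := by
  rw [norm_eq_abs_toReal, sq_abs, ← cos_toReal]
  exact sq_le_pi_sq_div_two_mul_one_sub_cos (abs_toReal_le_pi θ)

theorem eq_zero_or_eq_pi_of_norm_sq_eq {θ : Angle} (h : ‖θ‖ ^ 2 = π ^ 2 / 2 * (1 - cos θ)) :
    θ = 0 ∨ θ = π := by
  rw [norm_eq_abs_toReal, sq_abs, ← cos_toReal] at h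
  by_contra! hθ
  have h₀ : θ.toReal ≠ 0 := fun h₀ => hθ.1 (toReal_eq_zero_iff.mp h₀)
  have hπ : |θ.toReal| < π := by
    refine (abs_toReal_le_pi θ).lt_of_ne fun habs => hθ.2 (toReal_eq_pi_iff.mp ?_)
    rcases abs_eq pi_pos.le |>.mp habs with h | h
    · exact h
    · linarith [neg_pi_lt_toReal θ]
  exact (sq_lt_pi_sq_div_two_mul_one_sub_cos h₀ hπ).ne h

theorem cos_sub (θ ψ : Angle) : cos (θ - ψ) = cos θ * cos ψ + sin θ * sin ψ := by
  rw [sub_eq_add_neg, cos_add, cos_neg, sin_neg]; ring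

end Real.Angle

theorem Continuous.integrable_of_compactSpace {X E : Type*} [TopologicalSpace X]
    [CompactSpace X] [MeasurableSpace X] [OpensMeasurableSpace X] [NormedAddCommGroup E]
    {μ : Measure X} [IsFiniteMeasure μ] {f : X → E} (hf : Continuous f) : Integrable f μ :=
  hf.integrable_of_hasCompactSupport (.of_compactSpace f)

namespace MeasureTheory

variable {α : Type*} [MeasurableSpace α] [MeasurableSingletonClass α]

theorem Measure.eq_smul_dirac_add_smul_dirac_of_ae {ν : Measure α} {z w : α} (hzw : z ≠ w)
    (h : ∀ᵐ y ∂ν, y = z ∨ y = w) : ν = ν {z} • dirac z + ν {w} • dirac w :=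
  calc ν = ν.restrict ({z} ∪ {w}) := (restrict_eq_self_of_ae_mem h).symm
    _ = ν {z} • dirac z + ν {w} • dirac w := by
      rw [restrict_union (disjoint_singleton.mpr hzw) (measurableSet_singleton w),
        restrict_singleton, restrict_singleton]

theorem integral_smul_dirac_add_smul_dirac {E : Type*} [NormedAddCommGroup E] [NormedSpace ℝ E]
    [CompleteSpace E] (f : α → E) {a b : ℝ≥0∞} (ha : a ≠ ∞) (hb : b ≠ ∞) (z w : α) :
    ∫ x, f x ∂(a • Measure.dirac z + b • Measure.dirac w) = a.toReal • f z + b.toReal • f w := by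
  rw [integral_add_measure ((integrable_dirac enorm_lt_top).smul_measure ha)
    ((integrable_dirac enorm_lt_top).smul_measure hb), integral_smul_measure,
    integral_smul_measure, integral_dirac, integral_dirac]

end MeasureTheory

open MeasureTheory Measure

def distSqEnergy {X : Type*} [PseudoMetricSpace X] [MeasurableSpace X] (ν : Measure X) : ℝ :=
  ∫ x, ∫ y, dist x y ^ 2 ∂ν ∂ν

theorem distSqEnergy_smul_dirac_add_smul_dirac {X : Type*} [PseudoMetricSpace X]
    [MeasurableSpace X] [MeasurableSingletonClass X] {a b : ℝ≥0∞} (ha : a ≠ ∞) (hb : b ≠ ∞)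
    (z w : X) :
    distSqEnergy (a • dirac z + b • dirac w) = 2 * a.toReal * b.toReal * dist z w ^ 2 := by
  simp only [distSqEnergy, integral_smul_dirac_add_smul_dirac _ ha hb, dist_self, dist_comm w z,
    smul_eq_mul]
  ring

theorem distSqEnergy_eq_integral_prod {X : Type*} [PseudoMetricSpace X] [CompactSpace X]
    [MeasurableSpace X] [BorelSpace X] (ν : Measure X) [IsFiniteMeasure ν] :
    distSqEnergy ν = ∫ p, dist p.1 p.2 ^ 2 ∂ν.prod ν :=
  (integral_prod _ ((continuous_fst.dist continuous_snd).pow 2).integrable_of_compactSpace).symm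

local notation "𝕊" => AddCircle (2 * π)

namespace Real.Angle

/-- `Real.Angle` is by definition `AddCircle (2 * π)`. Transporting along this identity, rather
than unfolding it, keeps terms type-correct at reducible transparency, so `rw` and `simp` apply. -/
def ofAddCircle : 𝕊 ≃+ Angle := AddEquiv.refl _

theorem continuous_ofAddCircle : Continuous ofAddCircle := continuous_id

theorem norm_ofAddCircle (θ : 𝕊) : ‖ofAddCircle θ‖ = ‖θ‖ := rfl

theorem ofAddCircle_coe (t : ℝ) : ofAddCircle (t : 𝕊) = t := rfl

end Real.Angle

open Angle

namespace AddCircle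

variable (ν : Measure 𝕊)

theorem dist_sq_le_pi_sq_div_two_mul_one_sub_cos (x y : 𝕊) :
    dist x y ^ 2 ≤ π ^ 2 / 2 * (1 - Angle.cos (ofAddCircle (x - y))) := by
  rw [dist_eq_norm, ← norm_ofAddCircle]
  exact norm_sq_le_pi_sq_div_two_mul_one_sub_cos _

theorem continuous_cos_sub : Continuous fun p : 𝕊 × 𝕊 => Angle.cos (ofAddCircle (p.1 - p.2)) :=
  continuous_cos.comp (continuous_ofAddCircle.comp (continuous_fst.sub continuous_snd))

theorem integral_integral_cos_sub [IsFiniteMeasure ν] :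
    ∫ x, ∫ y, Angle.cos (ofAddCircle (x - y)) ∂ν ∂ν =
      (∫ x, Angle.cos (ofAddCircle x) ∂ν) ^ 2 + (∫ x, Angle.sin (ofAddCircle x) ∂ν) ^ 2 := by
  have hcos : Integrable (fun x => Angle.cos (ofAddCircle x)) ν :=
    (continuous_cos.comp continuous_ofAddCircle).integrable_of_compactSpace
  have hsin : Integrable (fun x => Angle.sin (ofAddCircle x)) ν :=
    (continuous_sin.comp continuous_ofAddCircle).integrable_of_compactSpace
  simp only [map_sub, Angle.cos_sub, integral_add (hcos.const_mul _) (hsin.const_mul _),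
    integral_const_mul, integral_add (hcos.mul_const _) (hsin.mul_const _), integral_mul_const]
  ring

def distSqGap (p : 𝕊 × 𝕊) : ℝ :=
  π ^ 2 / 2 * (1 - Angle.cos (ofAddCircle (p.1 - p.2))) - dist p.1 p.2 ^ 2

theorem distSqGap_nonneg (p : 𝕊 × 𝕊) : 0 ≤ distSqGap p :=
  sub_nonneg.mpr (dist_sq_le_pi_sq_div_two_mul_one_sub_cos p.1 p.2)

theorem continuous_distSqGap : Continuous distSqGap :=
  (continuous_const.mul (continuous_const.sub continuous_cos_sub)).sub
    ((continuous_fst.dist continuous_snd).pow 2)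

theorem distSqEnergy_eq_sub_integral_distSqGap [IsProbabilityMeasure ν] :
    distSqEnergy ν = π ^ 2 / 2 * (1 - ((∫ x, Angle.cos (ofAddCircle x) ∂ν) ^ 2 +
        (∫ x, Angle.sin (ofAddCircle x) ∂ν) ^ 2)) - ∫ p, distSqGap p ∂ν.prod ν := by
  have hcos := continuous_cos_sub.integrable_of_compactSpace (μ := ν.prod ν)
  have hdist : Integrable (fun p : 𝕊 × 𝕊 => dist p.1 p.2 ^ 2) (ν.prod ν) :=
    ((continuous_fst.dist continuous_snd).pow 2).integrable_of_compactSpace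
  have hbound : Integrable
      (fun p : 𝕊 × 𝕊 => π ^ 2 / 2 * (1 - Angle.cos (ofAddCircle (p.1 - p.2)))) (ν.prod ν) :=
    ((integrable_const 1).sub hcos).const_mul _
  unfold distSqGap
  rw [integral_sub hbound hdist, integral_const_mul,
    integral_sub (integrable_const 1) hcos, integral_prod _ hcos, integral_integral_cos_sub,
    ← distSqEnergy_eq_integral_prod]
  simp

theorem distSqEnergy_le [IsProbabilityMeasure ν] : distSqEnergy ν ≤ π ^ 2 / 2 := by
  rw [distSqEnergy_eq_sub_integral_distSqGap]
  nlinarith [integral_nonneg (μ := ν.prod ν) (f := distSqGap) distSqGap_nonneg, sq_nonneg π,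
    sq_nonneg (∫ x, Angle.cos (ofAddCircle x) ∂ν), sq_nonneg (∫ x, Angle.sin (ofAddCircle x) ∂ν)]

theorem exists_ae_eq_or_eq_add_pi_of_distSqEnergy_eq [IsProbabilityMeasure ν]
    (h : distSqEnergy ν = π ^ 2 / 2) : ∃ z : 𝕊, ∀ᵐ y ∂ν, y = z ∨ y = z + π := by
  have hgap_zero : ∫ p, distSqGap p ∂ν.prod ν = 0 := by
    rw [distSqEnergy_eq_sub_integral_distSqGap] at h
    nlinarith [integral_nonneg (μ := ν.prod ν) (f := distSqGap) distSqGap_nonneg, sq_nonneg π,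
      sq_nonneg (∫ x, Angle.cos (ofAddCircle x) ∂ν), sq_nonneg (∫ x, Angle.sin (ofAddCircle x) ∂ν)]
  have hae := (integral_eq_zero_iff_of_nonneg distSqGap_nonneg
    continuous_distSqGap.integrable_of_compactSpace).mp hgap_zero
  obtain ⟨z, hz⟩ := (ae_ae_of_ae_prod hae).exists
  refine ⟨z, hz.mono fun y hy => ?_⟩
  have hnorm : ‖ofAddCircle (z - y)‖ ^ 2 = π ^ 2 / 2 * (1 - Angle.cos (ofAddCircle (z - y))) := by
    rw [norm_ofAddCircle, ← dist_eq_norm]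
    simp only [Pi.zero_apply, distSqGap] at hy
    linarith
  rcases eq_zero_or_eq_pi_of_norm_sq_eq hnorm with h0 | hπ
  · exact .inl (sub_eq_zero.mp ((map_eq_zero_iff _ ofAddCircle.injective).mp h0)).symm
  · refine .inr (ofAddCircle.injective ?_)
    rw [map_add, ofAddCircle_coe, ← sub_coe_pi_eq_add_coe_pi, ← hπ, map_sub,
      _root_.sub_sub_cancel]

theorem dist_add_pi (z : 𝕊) : dist z (z + π) = π := by
  rw [dist_eq_norm, sub_add_cancel_left, norm_neg]
  simpa [abs_of_pos two_pi_pos, mul_div_cancel_left₀] using norm_half_period_eq (p := 2 * π)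

theorem distSqEnergy_antipodal (z : 𝕊) :
    distSqEnergy ((2⁻¹ : ℝ≥0∞) • (dirac z + dirac (z + π))) = π ^ 2 / 2 := by
  rw [smul_add, distSqEnergy_smul_dirac_add_smul_dirac (by simp) (by simp), dist_add_pi]
  norm_num
  ring

theorem distSqEnergy_eq_iff [IsProbabilityMeasure ν] :
    distSqEnergy ν = π ^ 2 / 2 ↔ ∃ z : 𝕊, ν = (2⁻¹ : ℝ≥0∞) • (dirac z + dirac (z + π)) := by
  refine ⟨fun h => ?_, fun ⟨z, hz⟩ => hz ▸ distSqEnergy_antipodal z⟩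
  obtain ⟨z, hz⟩ := exists_ae_eq_or_eq_add_pi_of_distSqEnergy_eq ν h
  have hne : z ≠ z + π := fun h => Real.pi_ne_zero (by rw [← dist_add_pi z, ← h, dist_self])
  have hν := Measure.eq_smul_dirac_add_smul_dirac_of_ae hne hz
  have hsum : (ν {z}).toReal + (ν {z + π}).toReal = 1 := by
    have huniv := congrArg (fun m : Measure 𝕊 => (m univ).toReal) hν
    simp only [measure_univ, ENNReal.toReal_one, Measure.coe_add, Measure.coe_smul, Pi.add_apply,
      Pi.smul_apply, dirac_apply_of_mem (mem_univ _), smul_eq_mul, mul_one] at huniv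
    rw [huniv, ENNReal.toReal_add (measure_ne_top _ _) (measure_ne_top _ _)]
  have hprod : (ν {z}).toReal * (ν {z + π}).toReal = 1 / 4 := by
    rw [hν, distSqEnergy_smul_dirac_add_smul_dirac (measure_ne_top _ _) (measure_ne_top _ _),
      dist_add_pi] at h
    have h' : (2 * (ν {z}).toReal * (ν {z + π}).toReal) * π ^ 2 = 1 / 2 * π ^ 2 := by linarith
    linarith [mul_right_cancel₀ (by positivity) h']
  have hhalf (x : 𝕊) (hx : (ν {x}).toReal = 1 / 2) : ν {x} = 2⁻¹ := by
    rw [← ENNReal.ofReal_toReal (measure_ne_top ν {x}), hx, one_div,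
      ENNReal.ofReal_inv_of_pos two_pos, ENNReal.ofReal_ofNat]
  refine ⟨z, ?_⟩
  rw [hν, hhalf z (by nlinarith), hhalf (z + π) (by nlinarith), smul_add]

end AddCircle

section Torus

variable {d : ℕ}

theorem tdist_sq (x y : Torus d) : tdist x y ^ 2 = ∑ i, dist (x i) (y i) ^ 2 :=
  Real.sq_sqrt (Finset.sum_nonneg fun _ _ => sq_nonneg _)

theorem negSqEnergy_eq_neg_sum_distSqEnergy (μ : Measure (Torus d)) [IsFiniteMeasure μ] :
    negSqEnergy μ = -∑ i, distSqEnergy (μ.map fun x => x i) := by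
  have hcoord (i : Fin d) : Continuous fun p : Torus d × Torus d => dist (p.1 i) (p.2 i) ^ 2 := by
    fun_prop
  have htdist : Integrable (fun p : Torus d × Torus d => tdist p.1 p.2 ^ 2) (μ.prod μ) := by
    simp only [tdist_sq]
    exact (continuous_finsetSum _ fun i _ => hcoord i).integrable_of_compactSpace
  rw [negSqEnergy, ← integral_prod _ htdist]
  simp only [tdist_sq]
  rw [integral_finsetSum _ fun i _ => (hcoord i).integrable_of_compactSpace]
  congr 1
  refine Finset.sum_congr rfl fun i _ => ?_
  have hi : Measurable fun x : Torus d => x i := measurable_pi_apply i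
  rw [distSqEnergy_eq_integral_prod, Measure.map_prod_map _ _ hi hi]
  exact (integral_map (hi.prodMap hi).aemeasurable
    ((continuous_fst.dist continuous_snd).pow 2).aestronglyMeasurable).symm

theorem neg_le_negSqEnergy (ν : Measure (Torus d)) [IsProbabilityMeasure ν] :
    -(d * (π ^ 2 / 2)) ≤ negSqEnergy ν := by
  rw [negSqEnergy_eq_neg_sum_distSqEnergy, neg_le_neg_iff]
  calc ∑ i, distSqEnergy (ν.map fun x => x i) ≤ ∑ _i : Fin d, π ^ 2 / 2 :=
        Finset.sum_le_sum fun i _ =>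
          have := isProbabilityMeasure_map (μ := ν) (measurable_pi_apply i).aemeasurable
          AddCircle.distSqEnergy_le _
    _ = d * (π ^ 2 / 2) := by simp

theorem negSqEnergy_eq_iff (μ : Measure (Torus d)) [IsProbabilityMeasure μ] :
    negSqEnergy μ = -(d * (π ^ 2 / 2)) ↔ ∀ i : Fin d, ∃ z : 𝕊,
      μ.map (fun x => x i) = (2⁻¹ : ℝ≥0∞) • (dirac z + dirac (z + π)) := by
  have hmarg (i : Fin d) : IsProbabilityMeasure (μ.map fun x => x i) :=
    isProbabilityMeasure_map (measurable_pi_apply i).aemeasurable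
  have hconst : (d : ℝ) * (π ^ 2 / 2) = ∑ _i : Fin d, π ^ 2 / 2 := by simp
  rw [negSqEnergy_eq_neg_sum_distSqEnergy, neg_inj, hconst,
    Finset.sum_eq_sum_iff_of_le fun i _ => AddCircle.distSqEnergy_le _]
  simp only [Finset.mem_univ, true_implies]
  exact forall_congr' fun i => AddCircle.distSqEnergy_eq_iff _

theorem exists_isProbabilityMeasure_negSqEnergy_eq (d : ℕ) :
    ∃ ν : Measure (Torus d), IsProbabilityMeasure ν ∧ negSqEnergy ν = -(d * (π ^ 2 / 2)) := by
  let ν₁ : Measure 𝕊 := (2⁻¹ : ℝ≥0∞) • (dirac (0 : 𝕊) + dirac ((0 : 𝕊) + π))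
  have : IsProbabilityMeasure ν₁ := ⟨by
    rw [Measure.smul_apply, Measure.add_apply, measure_univ, measure_univ, one_add_one_eq_two,
      smul_eq_mul, ENNReal.inv_mul_cancel two_ne_zero ENNReal.ofNat_ne_top]⟩
  have hdiag : Measurable fun (θ : 𝕊) (_ : Fin d) => θ :=
    measurable_pi_lambda _ fun _ => measurable_id
  have hν := isProbabilityMeasure_map (μ := ν₁) hdiag.aemeasurable
  refine ⟨ν₁.map fun θ _ => θ, hν, (negSqEnergy_eq_iff _).mpr fun i => ⟨0, ?_⟩⟩
  rw [Measure.map_map (measurable_pi_apply i) hdiag]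
  simp only [Function.comp_def, Measure.map_id', ν₁]

end Torus

theorem riesz_neg_two_minimizers_on_torus_general
    (d : ℕ) (μ : Measure (Torus d)) [IsProbabilityMeasure μ] :
    (∀ ν : Measure (Torus d), IsProbabilityMeasure ν → negSqEnergy μ ≤ negSqEnergy ν) ↔
      (∀ i : Fin d, ∃ z : AddCircle (2 * Real.pi),
        Measure.map (fun x => x i) μ =
          (2⁻¹ : ℝ≥0∞) • (Measure.dirac z +
            Measure.dirac (z + (Real.pi : AddCircle (2 * Real.pi))))) := by
  rw [← negSqEnergy_eq_iff]
  obtain ⟨ν₀, hν₀, hν₀_energy⟩ := exists_isProbabilityMeasure_negSqEnergy_eq d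
  exact ⟨fun hmin => le_antisymm (hν₀_energy ▸ hmin ν₀ hν₀) (neg_le_negSqEnergy μ),
    fun h ν _ => h ▸ neg_le_negSqEnergy ν⟩

/-- On the flat `d`-torus, a probability measure minimizes the Riesz energy for `s = −2`
iff each of its coordinate projections to the circle is the average of two Dirac masses
at a pair of antipodal points. -/
theorem riesz_neg_two_minimizers_on_torus
    (d : ℕ) (hd : 1 ≤ d) (μ : Measure (Torus d)) [IsProbabilityMeasure μ] :
    (∀ ν : Measure (Torus d), IsProbabilityMeasure ν → negSqEnergy μ ≤ negSqEnergy ν) ↔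
      (∀ i : Fin d, ∃ z : AddCircle (2 * Real.pi),
        Measure.map (fun x => x i) μ =
          (2⁻¹ : ℝ≥0∞) • (Measure.dirac z +
            Measure.dirac (z + (Real.pi : AddCircle (2 * Real.pi))))) :=
  riesz_neg_two_minimizers_on_torus_general d μ
end
end
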